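/- arXiv:2105.07555 — 6 statements merged into one kernel-verified Lean document; each statement's English description precedes it below -/
import Mathlib

section
/- Suppose X and Y are real-valued random variables whose conditional distribution functions F_{X|Z}(·|z) and F_{Y|Z}(·|z) are continuous for every value z of Z, and Z is a real-valued random variable with continuous distribution function F_Z. Then X is conditionally independent of Y given Z if and only if the three random variables U = F_{X|Z}(X|Z), V = F_{Y|Z}(Y|Z) and W = F_Z(Z) are mutually independent. -/
/-!
Given `Z = z`, the conditional probability integral transform sends the conditional laws of `X`
and `Y` to the uniform law on `[0, 1]`, and `W = F_Z(Z)` is uniform as well. Conditional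
independence says that the law of `(Z, X, Y)` is `ν ⊗ (κ_X × κ_Y)`, with `ν` the law of `Z` and
`κ_X`, `κ_Y` the conditional laws; pushed forward by `(z, x, y) ↦ (z, F_{X|Z}(x|z), F_{Y|Z}(y|z))`
this becomes `ν ⊗ (uniform × uniform)`, and replacing `z` by `F_Z(z)` gives the uniform law on the
cube.

Conversely, a distribution function is strictly increasing off a null set of its own measure, so
almost surely `{X ≤ x} = {U ≤ F_{X|Z}(x|Z)}`, `{Y ≤ y} = {V ≤ F_{Y|Z}(y|Z)}` and
`{Z ≤ a} = {W ≤ F_Z(a)}`. Hence the law of `(U, V, W)` determines that of `(Z, U, V)`, which in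
turn determines the law of `(Z, X, Y)` on the boxes `Iic a ×ˢ Iic x ×ˢ Iic y`: the law of
`(U, V, W)` is uniform for `(Z, X, Y)` exactly when it is for `ν ⊗ (κ_X × κ_Y)`.
-/

open MeasureTheory ProbabilityTheory Set Filter
open scoped Topology

noncomputable section

namespace ProbabilityTheory

def unitUniform : Measure ℝ := volume.restrict unitInterval

instance : IsProbabilityMeasure unitUniform := ⟨by simp [unitUniform, unitInterval]⟩

lemma unitUniform_Iic (c : ℝ) : unitUniform (Iic c) = ENNReal.ofReal (min c 1) := by
  have : Iic c ∩ unitInterval = Icc 0 (min c 1) := by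
    ext t; simp only [mem_inter_iff, mem_Iic, unitInterval, mem_Icc, le_min_iff]; tauto
  rw [unitUniform, Measure.restrict_apply measurableSet_Iic, this, Real.volume_Icc, sub_zero]

end ProbabilityTheory

namespace StieltjesFunction

variable (F : StieltjesFunction ℝ)

/-- The set is covered by the null intervals `Ioc x q` with `q` in it: its maximum if it has
one, rational `q` otherwise. -/
lemma measure_flat_right_eq_zero (x : ℝ) : F.measure {y | x < y ∧ F y ≤ F x} = 0 := by
  set S := {y | x < y ∧ F y ≤ F x}
  have hIoc_null : ∀ s ∈ S, F.measure (Ioc x s) = 0 := fun s hs => by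
    rw [F.measure_Ioc, ENNReal.ofReal_eq_zero, sub_nonpos]
    exact hs.2
  by_cases hmax : ∃ s ∈ S, ∀ y ∈ S, y ≤ s
  · obtain ⟨s, hs, hmax⟩ := hmax
    exact measure_mono_null (fun y hy => mem_Ioc.2 ⟨hy.1, hmax y hy⟩) (hIoc_null s hs)
  push Not at hmax
  have hcover : S ⊆ ⋃ q : {q : ℚ // (q : ℝ) ∈ S}, Ioc x (q : ℝ) := by
    intro s hs
    obtain ⟨y, hy, hsy⟩ := hmax s hs
    obtain ⟨q, hsq, hqy⟩ := exists_rat_btwn hsy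
    exact mem_iUnion.2 ⟨⟨q, hs.1.trans hsq, (F.mono hqy.le).trans hy.2⟩, hs.1, hsq.le⟩
  exact measure_mono_null hcover (measure_iUnion_null fun q => hIoc_null _ q.2)

lemma ae_le_iff_le (x : ℝ) : ∀ᵐ y ∂F.measure, F y ≤ F x ↔ y ≤ x := by
  refine measure_mono_null (fun y hy => ?_) (F.measure_flat_right_eq_zero x)
  by_contra hflat
  exact hy ⟨fun hFy => not_lt.1 fun hxy => hflat ⟨hxy, hFy⟩, fun hyx => F.mono hyx⟩

theorem map_measure_eq_unitUniform (hF : Continuous F) (hbot : Tendsto F atBot (𝓝 0))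
    (htop : Tendsto F atTop (𝓝 1)) : F.measure.map F = unitUniform := by
  have : IsProbabilityMeasure F.measure := ⟨by simp [F.measure_univ hbot htop]⟩
  refine Measure.ext_of_Iic _ _ fun u => ?_
  rw [Measure.map_apply hF.measurable measurableSet_Iic, unitUniform_Iic]
  rcases le_or_gt 1 u with hu | hu
  · rw [min_eq_right hu, ENNReal.ofReal_one, ← MeasureTheory.measure_univ (μ := F.measure)]
    congr
    exact eq_univ_of_forall fun y => (F.mono.ge_of_tendsto htop y).trans hu
  by_cases hrange : u ∈ range F
  · obtain ⟨b, rfl⟩ := hrange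
    rw [min_eq_left hu.le, ← sub_zero (F b), ← F.measure_Iic hbot, sub_zero]
    exact measure_congr (eventuallyEq_set.2 (F.ae_le_iff_le b))
  · have hu0 : u ≤ 0 := not_lt.1 fun hu0 => hrange <| mem_range_of_exists_le_of_exists_ge hF
      (hbot.eventually_le_const hu0).exists (htop.eventually_const_le hu).exists
    have hempty : F ⁻¹' Iic u = ∅ := eq_empty_of_forall_notMem fun y hy =>
      hrange ⟨y, le_antisymm hy (hu0.trans (F.mono.le_of_tendsto hbot y))⟩
    rw [hempty, measure_empty, min_eq_left hu.le, ENNReal.ofReal_of_nonpos hu0]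

end StieltjesFunction

lemma Real.isCountablySpanning_range_Iic : IsCountablySpanning (range (Iic : ℝ → Set ℝ)) :=
  ⟨fun n : ℕ => Iic (n : ℝ), fun _ => mem_range_self _,
    iUnion_Iic_of_not_bddAbove_range fun ⟨b, hb⟩ => by
      obtain ⟨n, hn⟩ := exists_nat_gt b
      exact hn.not_ge (hb (mem_range_self n))⟩

namespace MeasureTheory.Measure

lemma ext_of_Iic_prod_Iic_prod_Iic {m m' : Measure (ℝ × ℝ × ℝ)} [IsProbabilityMeasure m]
    [IsProbabilityMeasure m']
    (h : ∀ a x y, m (Iic a ×ˢ Iic x ×ˢ Iic y) = m' (Iic a ×ˢ Iic x ×ˢ Iic y)) : m = m' := by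
  have hgen : MeasurableSpace.generateFrom (range (Iic : ℝ → Set ℝ)) = Real.measurableSpace :=
    (borel_eq_generateFrom_Iic ℝ).symm.trans BorelSpace.measurable_eq.symm
  have hspan := Real.isCountablySpanning_range_Iic
  refine ext_of_generate_finite _
    (generateFrom_eq_prod hgen (generateFrom_eq_prod hgen hgen hspan hspan) hspan
      (hspan.prod hspan)).symm (isPiSystem_Iic.prod (isPiSystem_Iic.prod isPiSystem_Iic)) ?_
    (by simp)
  rintro _ ⟨_, ⟨a, rfl⟩, _, ⟨_, ⟨x, rfl⟩, _, ⟨y, rfl⟩, rfl⟩, rfl⟩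
  exact h a x y

section

variable {α β γ : Type*} {mα : MeasurableSpace α} {mβ : MeasurableSpace β}
  {mγ : MeasurableSpace γ}

lemma map_compProd_eq_prod {μ : Measure α} [SigmaFinite μ] {κ : Kernel α β}
    [IsSFiniteKernel κ] {f : α → β → γ} (hf : Measurable (Function.uncurry f)) {ξ : Measure γ}
    [SigmaFinite ξ] (h : ∀ a, (κ a).map (f a) = ξ) :
    (μ ⊗ₘ κ).map (fun p => (p.1, f p.1 p.2)) = μ.prod ξ := by
  have hg : Measurable fun p : α × β => (p.1, f p.1 p.2) := measurable_fst.prodMk hf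
  refine (Measure.prod_eq fun s t hs ht => ?_).symm
  have hsection : ∀ a, κ a (Prod.mk a ⁻¹' ((fun p => (p.1, f p.1 p.2)) ⁻¹' s ×ˢ t))
      = s.indicator (fun _ => ξ t) a := by
    intro a
    by_cases ha : a ∈ s
    · rw [indicator_of_mem ha, ← h a, Measure.map_apply (hf.of_uncurry_left (x := a)) ht]
      congr 1
      ext b
      simp [ha]
    · rw [indicator_of_notMem ha]
      convert measure_empty (μ := κ a)
      ext b
      simp [ha]
  rw [Measure.map_apply hg (hs.prod ht), Measure.compProd_apply (hg (hs.prod ht))]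
  simp_rw [hsection]
  rw [lintegral_indicator_const hs, mul_comm]

lemma map_compProd_prod_fst (ν : Measure α) [SFinite ν] (κ : Kernel α β) [IsSFiniteKernel κ]
    (η : Kernel α γ) [IsMarkovKernel η] :
    (ν ⊗ₘ (κ ×ₖ η)).map (fun p => (p.1, p.2.1)) = ν ⊗ₘ κ := by
  have h := compProd_map (μ := ν) (κ := κ ×ₖ η) measurable_fst
  rw [← Kernel.fst_eq, Kernel.fst_prod] at h
  exact h.symm

lemma map_compProd_prod_snd (ν : Measure α) [SFinite ν] (κ : Kernel α β) [IsMarkovKernel κ]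
    (η : Kernel α γ) [IsSFiniteKernel η] :
    (ν ⊗ₘ (κ ×ₖ η)).map (fun p => (p.1, p.2.2)) = ν ⊗ₘ η := by
  have h := compProd_map (μ := ν) (κ := κ ×ₖ η) measurable_snd
  rw [← Kernel.snd_eq, Kernel.snd_prod] at h
  exact h.symm

end

end MeasureTheory.Measure

namespace ProbabilityTheory

section

variable {α β γ : Type*} {mα : MeasurableSpace α} {mβ : MeasurableSpace β}
  {mγ : MeasurableSpace γ}

variable (ρ : Measure (α × ℝ))

def condCDFKernel : Kernel α ℝ := ⟨fun a => (condCDF ρ a).measure, measurable_measure_condCDF ρ⟩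

lemma condCDFKernel_apply (a : α) : condCDFKernel ρ a = (condCDF ρ a).measure := rfl

instance : IsMarkovKernel (condCDFKernel ρ) :=
  ⟨fun a => by rw [condCDFKernel_apply]; infer_instance⟩

lemma fst_compProd_condCDFKernel [IsFiniteMeasure ρ] : ρ.fst ⊗ₘ condCDFKernel ρ = ρ := by
  refine Measure.ext_prod fun hs ht => ?_
  rw [Measure.compProd_apply_prod hs ht]
  simpa only [Kernel.const_apply, IsCondKernelCDF.toKernel_apply, condCDFKernel_apply] using
    setLIntegral_toKernel_prod (isCondKernelCDF_condCDF ρ) () hs ht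

variable {ρ}

lemma measurable_condCDF_uncurry (hcont : ∀ a, Continuous (condCDF ρ a)) :
    Measurable fun p : α × ℝ => condCDF ρ p.1 p.2 :=
  (measurable_uncurry_of_continuous_of_measurable (u := fun x a => condCDF ρ a x) hcont
    (measurable_condCDF ρ)).comp measurable_swap

lemma ae_condCDF_le_iff_le [IsFiniteMeasure ρ] (hcont : ∀ a, Continuous (condCDF ρ a)) (x : ℝ) :
    ∀ᵐ p ∂ρ, condCDF ρ p.1 p.2 ≤ condCDF ρ p.1 x ↔ p.2 ≤ x := by
  have hF := measurable_condCDF_uncurry hcont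
  have hmeas : MeasurableSet {p : α × ℝ | condCDF ρ p.1 p.2 ≤ condCDF ρ p.1 x ↔ p.2 ≤ x} :=
    (measurableSet_le hF ((measurable_condCDF ρ x).comp measurable_fst)).iff
      (measurableSet_le measurable_snd measurable_const)
  have h := Measure.ae_compProd_of_ae_ae (μ := ρ.fst) (κ := condCDFKernel ρ) hmeas
    (ae_of_all _ fun a => (condCDF ρ a).ae_le_iff_le x)
  rwa [fst_compProd_condCDFKernel] at h

lemma map_condCDF_prod_eq [IsFiniteMeasure ρ] (hcont : ∀ a, Continuous (condCDF ρ a)) :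
    ρ.map (fun p => (p.1, condCDF ρ p.1 p.2)) = ρ.fst.prod unitUniform := by
  have h := Measure.map_compProd_eq_prod (μ := ρ.fst) (κ := condCDFKernel ρ)
    (f := fun a x => condCDF ρ a x) (measurable_condCDF_uncurry hcont) fun a =>
    (condCDF ρ a).map_measure_eq_unitUniform (hcont a) (tendsto_condCDF_atBot ρ a)
      (tendsto_condCDF_atTop ρ a)
  rwa [fst_compProd_condCDFKernel] at h

lemma map_condCDF_eq_unitUniform [IsProbabilityMeasure ρ] (hcont : ∀ a, Continuous (condCDF ρ a)) :
    ρ.map (fun p => condCDF ρ p.1 p.2) = unitUniform := by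
  have h := congrArg (Measure.map Prod.snd) (map_condCDF_prod_eq hcont)
  rwa [Measure.map_map measurable_snd (measurable_fst.prodMk (measurable_condCDF_uncurry hcont)),
    Measure.map_snd_prod, measure_univ, one_smul] at h

lemma condIndepFun_iff_map_eq_compProd_condCDFKernel {Ω : Type*} {mΩ : MeasurableSpace Ω}
    [StandardBorelSpace Ω] {μ : Measure Ω} [IsFiniteMeasure μ] {X Y : Ω → ℝ} {Z : Ω → α}
    (hX : Measurable X) (hY : Measurable Y) (hZ : Measurable Z) :
    X ⟂ᵢ[Z, hZ; μ] Y ↔ μ.map (fun ω => (Z ω, X ω, Y ω)) =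
      μ.map Z ⊗ₘ (condCDFKernel (μ.map fun ω => (Z ω, X ω)) ×ₖ
        condCDFKernel (μ.map fun ω => (Z ω, Y ω))) := by
  have hcondDistrib {V : Ω → ℝ} (hV : Measurable V) :
      condDistrib V Z μ =ᵐ[μ.map Z] condCDFKernel (μ.map fun ω => (Z ω, V ω)) :=
    condDistrib_ae_eq_of_measure_eq_compProd Z hV.aemeasurable <| by
      simpa only [Measure.fst_map_prodMk hV] using
        (fst_compProd_condCDFKernel (μ.map fun ω => (Z ω, V ω))).symm
  rw [condIndepFun_iff_map_prod_eq_prod_condDistrib_prod_condDistrib hX hY hZ,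
    ← Measure.compProd_eq_comp_prod]
  refine Eq.congr_right (Measure.compProd_congr ?_)
  filter_upwards [hcondDistrib hX, hcondDistrib hY] with z hXz hYz
  rw [Kernel.prod_apply, Kernel.prod_apply, hXz, hYz]

def condCDFTransform (ρ₁ ρ₂ : Measure (α × ℝ)) (p : α × ℝ × ℝ) : α × ℝ × ℝ :=
  (p.1, condCDF ρ₁ p.1 p.2.1, condCDF ρ₂ p.1 p.2.2)

section

variable {ρ₁ ρ₂ : Measure (α × ℝ)}

lemma measurable_condCDFTransform (hcont₁ : ∀ a, Continuous (condCDF ρ₁ a))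
    (hcont₂ : ∀ a, Continuous (condCDF ρ₂ a)) : Measurable (condCDFTransform ρ₁ ρ₂) :=
  measurable_fst.prodMk
    (((measurable_condCDF_uncurry hcont₁).comp (measurable_fst.prodMk measurable_snd.fst)).prodMk
      ((measurable_condCDF_uncurry hcont₂).comp (measurable_fst.prodMk measurable_snd.snd)))

lemma map_compProd_condCDFKernel_prod (ν : Measure α) [SigmaFinite ν]
    (hcont₁ : ∀ a, Continuous (condCDF ρ₁ a)) (hcont₂ : ∀ a, Continuous (condCDF ρ₂ a)) :
    (ν ⊗ₘ (condCDFKernel ρ₁ ×ₖ condCDFKernel ρ₂)).map (condCDFTransform ρ₁ ρ₂) =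
      ν.prod (unitUniform.prod unitUniform) := by
  refine Measure.map_compProd_eq_prod
    (f := fun a (q : ℝ × ℝ) => (condCDF ρ₁ a q.1, condCDF ρ₂ a q.2))
    (measurable_condCDFTransform hcont₁ hcont₂).snd fun a => ?_
  rw [Kernel.prod_apply, condCDFKernel_apply, condCDFKernel_apply]
  change ((condCDF ρ₁ a).measure.prod (condCDF ρ₂ a).measure).map
    (Prod.map (condCDF ρ₁ a) (condCDF ρ₂ a)) = _
  rw [← Measure.map_prod_map _ _ (hcont₁ a).measurable (hcont₂ a).measurable]
  simp only [StieltjesFunction.map_measure_eq_unitUniform, hcont₁ a, hcont₂ a,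
    tendsto_condCDF_atBot, tendsto_condCDF_atTop]

end

lemma measure_Iic_prod_eq_map_condCDFTransform {m : Measure (ℝ × ℝ × ℝ)}
    {ρ₁ ρ₂ : Measure (ℝ × ℝ)} [IsFiniteMeasure ρ₁] [IsFiniteMeasure ρ₂]
    (hcont₁ : ∀ a, Continuous (condCDF ρ₁ a)) (hcont₂ : ∀ a, Continuous (condCDF ρ₂ a))
    (hm₁ : m.map (fun p => (p.1, p.2.1)) = ρ₁) (hm₂ : m.map (fun p => (p.1, p.2.2)) = ρ₂)
    (a x y : ℝ) :
    m (Iic a ×ˢ Iic x ×ˢ Iic y) = (m.map (condCDFTransform ρ₁ ρ₂))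
      {q : ℝ × ℝ × ℝ | q.1 ≤ a ∧ q.2.1 ≤ condCDF ρ₁ q.1 x ∧ q.2.2 ≤ condCDF ρ₂ q.1 y} := by
  have hx : ∀ᵐ p ∂m, condCDF ρ₁ p.1 p.2.1 ≤ condCDF ρ₁ p.1 x ↔ p.2.1 ≤ x :=
    ae_of_ae_map (μ := m) (f := fun p : ℝ × ℝ × ℝ => (p.1, p.2.1)) (by fun_prop)
      (by rw [hm₁]; exact ae_condCDF_le_iff_le hcont₁ x)
  have hy : ∀ᵐ p ∂m, condCDF ρ₂ p.1 p.2.2 ≤ condCDF ρ₂ p.1 y ↔ p.2.2 ≤ y :=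
    ae_of_ae_map (μ := m) (f := fun p : ℝ × ℝ × ℝ => (p.1, p.2.2)) (by fun_prop)
      (by rw [hm₂]; exact ae_condCDF_le_iff_le hcont₂ y)
  rw [Measure.map_apply (measurable_condCDFTransform hcont₁ hcont₂)]
  · refine measure_congr (eventuallyEq_set.2 ?_)
    filter_upwards [hx, hy] with p hpx hpy
    simp only [condCDFTransform, mem_prod, mem_Iic, mem_preimage, mem_ofPred_eq, hpx, hpy]
  · exact (measurableSet_le measurable_fst measurable_const).inter
      ((measurableSet_le measurable_snd.fst ((measurable_condCDF ρ₁ x).comp measurable_fst)).inter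
        (measurableSet_le measurable_snd.snd ((measurable_condCDF ρ₂ y).comp measurable_fst)))

end

lemma map_cdf_eq_unitUniform (ν : Measure ℝ) [IsProbabilityMeasure ν] (hcont : Continuous (cdf ν)) :
    ν.map (cdf ν) = unitUniform := by
  simpa only [measure_cdf] using
    (cdf ν).map_measure_eq_unitUniform hcont (tendsto_cdf_atBot ν) (tendsto_cdf_atTop ν)

lemma map_prod_cdf_rotate (ν ξ₁ ξ₂ : Measure ℝ) [IsProbabilityMeasure ν] [IsFiniteMeasure ξ₁]
    [IsFiniteMeasure ξ₂] (hcont : Continuous (cdf ν)) :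
    (ν.prod (ξ₁.prod ξ₂)).map (fun p => (p.2.1, p.2.2, cdf ν p.1)) =
      ξ₁.prod (ξ₂.prod unitUniform) := by
  have hG := (monotone_cdf ν).measurable
  refine Measure.ext_prod₃ fun {s t u} hs ht hu => ?_
  have hpre : (fun p : ℝ × ℝ × ℝ => (p.2.1, p.2.2, cdf ν p.1)) ⁻¹' (s ×ˢ t ×ˢ u) =
      (cdf ν ⁻¹' u) ×ˢ s ×ˢ t := by
    ext p
    simp only [mem_preimage, mem_prod]
    tauto
  rw [Measure.map_apply (by fun_prop) (hs.prod (ht.prod hu)), hpre, Measure.prod_prod,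
    Measure.prod_prod, Measure.prod_prod, Measure.prod_prod, ← Measure.map_apply hG hu,
    map_cdf_eq_unitUniform ν hcont]
  ring

lemma measure_Iic_prod_eq_map_cdf {m : Measure (ℝ × ℝ × ℝ)} {ν : Measure ℝ}
    [IsProbabilityMeasure ν] (hm : m.fst = ν) (a b c : ℝ) :
    m (Iic a ×ˢ Iic b ×ˢ Iic c) =
      (m.map fun p => (p.2.1, p.2.2, cdf ν p.1)) (Iic b ×ˢ Iic c ×ˢ Iic (cdf ν a)) := by
  have hG := (monotone_cdf ν).measurable
  have hν : ∀ᵐ z ∂ν, cdf ν z ≤ cdf ν a ↔ z ≤ a := by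
    simpa only [measure_cdf] using (cdf ν).ae_le_iff_le a
  have ha : ∀ᵐ p ∂m, cdf ν p.1 ≤ cdf ν a ↔ p.1 ≤ a :=
    ae_of_ae_map (μ := m) measurable_fst.aemeasurable (by rwa [← Measure.fst, hm])
  rw [Measure.map_apply (by fun_prop) (measurableSet_Iic.prod
    (measurableSet_Iic.prod measurableSet_Iic))]
  refine measure_congr (eventuallyEq_set.2 ?_)
  filter_upwards [ha] with p hpa
  simp only [mem_prod, mem_Iic, mem_preimage, hpa]
  tauto

section

variable {Ω : Type*} {mΩ : MeasurableSpace Ω} {μ : Measure Ω} [IsProbabilityMeasure μ]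

lemma map_eq_compProd_condCDFKernel_iff {X Y Z : Ω → ℝ} (hX : Measurable X) (hY : Measurable Y)
    (hZ : Measurable Z)
    (hcont₁ : ∀ z, Continuous (condCDF (μ.map fun ω => (Z ω, X ω)) z))
    (hcont₂ : ∀ z, Continuous (condCDF (μ.map fun ω => (Z ω, Y ω)) z)) :
    μ.map (fun ω => (Z ω, X ω, Y ω)) =
        μ.map Z ⊗ₘ (condCDFKernel (μ.map fun ω => (Z ω, X ω)) ×ₖ
          condCDFKernel (μ.map fun ω => (Z ω, Y ω))) ↔
      μ.map (fun ω => (Z ω, condCDF (μ.map fun ω => (Z ω, X ω)) (Z ω) (X ω),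
          condCDF (μ.map fun ω => (Z ω, Y ω)) (Z ω) (Y ω))) =
        (μ.map Z).prod (unitUniform.prod unitUniform) := by
  set ρ₁ := μ.map fun ω => (Z ω, X ω)
  set ρ₂ := μ.map fun ω => (Z ω, Y ω)
  have := Measure.isProbabilityMeasure_map (μ := μ) hZ.aemeasurable
  have := Measure.isProbabilityMeasure_map (μ := μ) (hZ.prodMk hX).aemeasurable
  have := Measure.isProbabilityMeasure_map (μ := μ) (hZ.prodMk hY).aemeasurable
  have := Measure.isProbabilityMeasure_map (μ := μ) (hZ.prodMk (hX.prodMk hY)).aemeasurable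
  have hmap : μ.map (fun ω => (Z ω, condCDF ρ₁ (Z ω) (X ω), condCDF ρ₂ (Z ω) (Y ω))) =
      (μ.map fun ω => (Z ω, X ω, Y ω)).map (condCDFTransform ρ₁ ρ₂) := by
    rw [Measure.map_map (measurable_condCDFTransform hcont₁ hcont₂) (by fun_prop)]
    rfl
  rw [hmap, ← map_compProd_condCDFKernel_prod (μ.map Z) hcont₁ hcont₂]
  refine ⟨fun h => by rw [h], fun h => Measure.ext_of_Iic_prod_Iic_prod_Iic fun a x y => ?_⟩
  have hρ₁ : μ.map Z ⊗ₘ condCDFKernel ρ₁ = ρ₁ := by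
    rw [← Measure.fst_map_prodMk (X := Z) hX, fst_compProd_condCDFKernel]
  have hρ₂ : μ.map Z ⊗ₘ condCDFKernel ρ₂ = ρ₂ := by
    rw [← Measure.fst_map_prodMk (X := Z) hY, fst_compProd_condCDFKernel]
  rw [measure_Iic_prod_eq_map_condCDFTransform hcont₁ hcont₂
      (by rw [Measure.map_map (by fun_prop) (by fun_prop)]; rfl)
      (by rw [Measure.map_map (by fun_prop) (by fun_prop)]; rfl),
    h, measure_Iic_prod_eq_map_condCDFTransform hcont₁ hcont₂
      (by rw [Measure.map_compProd_prod_fst, hρ₁]) (by rw [Measure.map_compProd_prod_snd, hρ₂])]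

lemma map_eq_prod_iff_map_cdf {Z U V : Ω → ℝ} (hZ : Measurable Z) (hU : Measurable U)
    (hV : Measurable V) (hcont : Continuous (cdf (μ.map Z))) :
    μ.map (fun ω => (Z ω, U ω, V ω)) = (μ.map Z).prod (unitUniform.prod unitUniform) ↔
      μ.map (fun ω => (U ω, V ω, cdf (μ.map Z) (Z ω))) =
        unitUniform.prod (unitUniform.prod unitUniform) := by
  have := Measure.isProbabilityMeasure_map (μ := μ) hZ.aemeasurable
  have := Measure.isProbabilityMeasure_map (μ := μ) (hZ.prodMk (hU.prodMk hV)).aemeasurable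
  have hG := (monotone_cdf (μ.map Z)).measurable
  have hmap : μ.map (fun ω => (U ω, V ω, cdf (μ.map Z) (Z ω))) =
      (μ.map fun ω => (Z ω, U ω, V ω)).map fun p => (p.2.1, p.2.2, cdf (μ.map Z) p.1) := by
    rw [Measure.map_map (by fun_prop) (by fun_prop)]
    rfl
  rw [hmap, ← map_prod_cdf_rotate (μ.map Z) unitUniform unitUniform hcont]
  refine ⟨fun h => by rw [h], fun h => Measure.ext_of_Iic_prod_Iic_prod_Iic fun a b c => ?_⟩
  rw [measure_Iic_prod_eq_map_cdf (Measure.fst_map_prodMk (hU.prodMk hV)), h,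
    measure_Iic_prod_eq_map_cdf Measure.fst_prod]

lemma map_condCDF_comp_eq_unitUniform {X Z : Ω → ℝ} (hX : Measurable X) (hZ : Measurable Z)
    (hcont : ∀ z, Continuous (condCDF (μ.map fun ω => (Z ω, X ω)) z)) :
    μ.map (fun ω => condCDF (μ.map fun ω => (Z ω, X ω)) (Z ω) (X ω)) = unitUniform := by
  have := Measure.isProbabilityMeasure_map (μ := μ) (hZ.prodMk hX).aemeasurable
  rw [← map_condCDF_eq_unitUniform hcont,
    Measure.map_map (measurable_condCDF_uncurry hcont) (hZ.prodMk hX)]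
  rfl

lemma map_cdf_comp_eq_unitUniform {Z : Ω → ℝ} (hZ : Measurable Z)
    (hcont : Continuous (cdf (μ.map Z))) :
    μ.map (fun ω => cdf (μ.map Z) (Z ω)) = unitUniform := by
  have := Measure.isProbabilityMeasure_map (μ := μ) hZ.aemeasurable
  rw [← map_cdf_eq_unitUniform _ hcont, Measure.map_map hcont.measurable hZ]
  rfl

end

end ProbabilityTheory

end

theorem conditional_independence_iff_mutual_independence_general
    {Ω : Type*} {mΩ : MeasurableSpace Ω} [StandardBorelSpace Ω]
    (μ : Measure Ω) [IsProbabilityMeasure μ]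
    (X Y Z : Ω → ℝ) (hX : Measurable X) (hY : Measurable Y) (hZ : Measurable Z)
    (hXZcont : ∀ z : ℝ, Continuous fun x => condCDF (μ.map fun ω => (Z ω, X ω)) z x)
    (hYZcont : ∀ z : ℝ, Continuous fun y => condCDF (μ.map fun ω => (Z ω, Y ω)) z y)
    (hFZcont : Continuous fun z => cdf (μ.map Z) z)
    (U V W : Ω → ℝ)
    (hU : U = fun ω => condCDF (μ.map fun ω' => (Z ω', X ω')) (Z ω) (X ω))
    (hV : V = fun ω => condCDF (μ.map fun ω' => (Z ω', Y ω')) (Z ω) (Y ω))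
    (hW : W = fun ω => cdf (μ.map Z) (Z ω)) :
    CondIndepFun (MeasurableSpace.comap Z inferInstance) hZ.comap_le X Y μ ↔
      μ.map (fun ω => (U ω, V ω, W ω)) =
        (μ.map U).prod ((μ.map V).prod (μ.map W)) := by
  subst hU hV hW
  beta_reduce
  have hUm : Measurable fun ω => condCDF (μ.map fun ω => (Z ω, X ω)) (Z ω) (X ω) :=
    (measurable_condCDF_uncurry hXZcont).comp (hZ.prodMk hX)
  have hVm : Measurable fun ω => condCDF (μ.map fun ω => (Z ω, Y ω)) (Z ω) (Y ω) :=
    (measurable_condCDF_uncurry hYZcont).comp (hZ.prodMk hY)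
  rw [condIndepFun_iff_map_eq_compProd_condCDFKernel hX hY hZ,
    map_eq_compProd_condCDFKernel_iff hX hY hZ hXZcont hYZcont,
    map_eq_prod_iff_map_cdf hZ hUm hVm hFZcont, map_condCDF_comp_eq_unitUniform hX hZ hXZcont,
    map_condCDF_comp_eq_unitUniform hY hZ hYZcont, map_cdf_comp_eq_unitUniform hZ hFZcont]

/-- (Proposition 1 of the paper.) Let `X, Y, Z` be real-valued random
variables such that the conditional distribution functions `F_{X|Z}(·|z)` and `F_{Y|Z}(·|z)`
are continuous for every `z`, and `Z` has continuous distribution function `F_Z`.  With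
`U = F_{X|Z}(X|Z)`, `V = F_{Y|Z}(Y|Z)` and `W = F_Z(Z)`, the variables `X` and `Y` are
conditionally independent given `Z` if and only if `U`, `V`, `W` are mutually independent
(i.e. the joint law of `(U,V,W)` is the product of the three marginal laws). -/
theorem conditional_independence_iff_mutual_independence
    {Ω : Type*} {mΩ : MeasurableSpace Ω} [StandardBorelSpace Ω] [Nonempty Ω]
    (μ : Measure Ω) [IsProbabilityMeasure μ]
    (X Y Z : Ω → ℝ) (hX : Measurable X) (hY : Measurable Y) (hZ : Measurable Z)
    (hXZcont : ∀ z : ℝ, Continuous fun x => condCDF (μ.map fun ω => (Z ω, X ω)) z x)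
    (hYZcont : ∀ z : ℝ, Continuous fun y => condCDF (μ.map fun ω => (Z ω, Y ω)) z y)
    (hFZcont : Continuous fun z => cdf (μ.map Z) z)
    (U V W : Ω → ℝ)
    (hU : U = fun ω => condCDF (μ.map fun ω' => (Z ω', X ω')) (Z ω) (X ω))
    (hV : V = fun ω => condCDF (μ.map fun ω' => (Z ω', Y ω')) (Z ω) (Y ω))
    (hW : W = fun ω => cdf (μ.map Z) (Z ω)) :
    CondIndepFun (MeasurableSpace.comap Z inferInstance) hZ.comap_le X Y μ ↔
      μ.map (fun ω => (U ω, V ω, W ω)) =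
        (μ.map U).prod ((μ.map V).prod (μ.map W)) :=
  conditional_independence_iff_mutual_independence_general (mΩ := mΩ) μ X Y Z hX hY hZ hXZcont
    hYZcont hFZcont U V W hU hV hW
end

section
/- Let X and Z be real-valued random variables such that the conditional distribution function F_{X|Z}(·|z) is continuous for every value z of Z. Then the random variable U = F_{X|Z}(X|Z) is uniformly distributed on (0,1) and is independent of Z. -/
/-!
For each `z`, the conditional law of `X` given `Z = z` is the Stieltjes measure of the continuous
distribution function `F = F_{X|Z}(·|z)`. Continuity makes every sublevel set `{F ≤ u}`, `0 < u < 1`,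
a ray `(-∞, g]` with `F g = u`, so `F` pushes its own measure forward to the uniform law on `(0,1)`.
Integrating this over the law of `Z` shows that `(Z, U)` has law `P_Z ⊗ Unif(0,1)`, which gives
both the uniformity of `U` and its independence from `Z`.
-/

open MeasureTheory ProbabilityTheory Filter Set

theorem Monotone.exists_preimage_Iic_eq_Iic
    {α β : Type*} [ConditionallyCompleteLinearOrder α] [TopologicalSpace α] [OrderTopology α]
    [DenselyOrdered α] [LinearOrder β] [TopologicalSpace β] [OrderClosedTopology β]
    {f : α → β} (hmono : Monotone f) (hf : Continuous f) {u : β}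
    (hlo : ∃ a, f a ≤ u) (hhi : ∃ b, u < f b) :
    ∃ g, f ⁻¹' Iic u = Iic g ∧ f g = u := by
  obtain ⟨b, hb⟩ := hhi
  have hbdd : ∀ x ∈ f ⁻¹' Iic u, x ≤ b := fun x hx =>
    le_of_not_gt fun hbx => (hb.trans_le (hmono hbx.le)).not_ge hx
  have hmem : sSup (f ⁻¹' Iic u) ∈ f ⁻¹' Iic u :=
    (isClosed_Iic.preimage hf).csSup_mem hlo ⟨b, hbdd⟩
  refine ⟨sSup (f ⁻¹' Iic u), Subset.antisymm (fun x hx => le_csSup ⟨b, hbdd⟩ hx)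
    fun x hx => (hmono hx).trans hmem, le_antisymm hmem ?_⟩
  obtain ⟨c, -, hfc⟩ := intermediate_value_Icc (csSup_le hlo hbdd) hf.continuousOn ⟨hmem, hb.le⟩
  exact hfc.symm.trans_le (hmono (le_csSup ⟨b, hbdd⟩ hfc.le))

namespace StieltjesFunction

theorem measure_preimage_Iic_of_lt_one (F : StieltjesFunction ℝ) (hF : Continuous F)
    (hbot : Tendsto F atBot (nhds 0)) (htop : Tendsto F atTop (nhds 1)) {u : ℝ} (hu : u < 1) :
    F.measure (F ⁻¹' Iic u) = ENNReal.ofReal u := by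
  by_cases hlo : ∃ a, F a ≤ u
  · obtain ⟨g, hg, hgu⟩ :=
      F.mono.exists_preimage_Iic_eq_Iic hF hlo (htop.eventually_const_lt hu).exists
    rw [hg, F.measure_Iic hbot, hgu, sub_zero]
  · push Not at hlo
    have hempty : F ⁻¹' Iic u = ∅ := eq_empty_of_forall_notMem fun x hx => (hlo x).not_ge hx
    rw [hempty, measure_empty,
      ENNReal.ofReal_of_nonpos (ge_of_tendsto' hbot fun x => (hlo x).le)]

/-- Probability integral transform. -/
theorem map_measure_eq_volume_restrict_Ioo (F : StieltjesFunction ℝ) (hF : Continuous F)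
    (hbot : Tendsto F atBot (nhds 0)) (htop : Tendsto F atTop (nhds 1)) :
    F.measure.map F = volume.restrict (Ioo 0 1) := by
  have := F.isProbabilityMeasure hbot htop
  refine Measure.ext_of_Iic _ _ fun u => ?_
  rw [Measure.map_apply hF.measurable measurableSet_Iic,
    Measure.restrict_congr_set Ioo_ae_eq_Ioc, Measure.restrict_apply measurableSet_Iic]
  rcases lt_or_ge u 1 with hu | hu
  · rw [F.measure_preimage_Iic_of_lt_one hF hbot htop hu, Iic_inter_Ioc_of_le hu.le,
      Real.volume_Ioc, sub_zero]
  · have hle : ∀ x, F x ≤ 1 := F.mono.ge_of_tendsto htop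
    rw [preimage_eq_univ_iff.2 fun _ ⟨x, hx⟩ => hx ▸ (hle x).trans hu, F.measure_univ hbot htop,
      inter_eq_right.2 fun x hx => hx.2.trans hu, Real.volume_Ioc, sub_zero, ENNReal.ofReal_one]

end StieltjesFunction

namespace ProbabilityTheory

variable {α : Type*} [MeasurableSpace α]

theorem measure_eq_lintegral_measure_condCDF (ρ : Measure (α × ℝ)) [IsFiniteMeasure ρ]
    {s : Set (α × ℝ)} (hs : MeasurableSet s) :
    ρ s = ∫⁻ a, (condCDF ρ a).measure (Prod.mk a ⁻¹' s) ∂ρ.fst := by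
  simpa [IsCondKernelCDF.toKernel_apply] using
    (lintegral_toKernel_mem (isCondKernelCDF_condCDF ρ) () hs).symm

theorem measurable_condCDF_uncurry_of_continuous (ρ : Measure (α × ℝ))
    (hcont : ∀ a, Continuous (condCDF ρ a)) :
    Measurable fun p : α × ℝ => condCDF ρ p.1 p.2 :=
  (measurable_uncurry_of_continuous_of_measurable (u := fun x a => condCDF ρ a x) hcont
    (measurable_condCDF ρ)).comp measurable_swap

theorem map_prodMk_condCDF_eq_prod (ρ : Measure (α × ℝ)) [IsFiniteMeasure ρ]
    (hcont : ∀ a, Continuous (condCDF ρ a)) :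
    ρ.map (fun p => (p.1, condCDF ρ p.1 p.2)) = ρ.fst.prod (volume.restrict (Ioo 0 1)) := by
  have hmeas := measurable_fst.prodMk (measurable_condCDF_uncurry_of_continuous ρ hcont)
  refine (Measure.prod_eq fun s t hs ht => ?_).symm
  have hsection : ∀ a, (condCDF ρ a).measure
      (Prod.mk a ⁻¹' ((fun p => (p.1, condCDF ρ p.1 p.2)) ⁻¹' s ×ˢ t)) =
      s.indicator (fun _ => volume.restrict (Ioo 0 1) t) a := by
    intro a
    by_cases ha : a ∈ s
    · rw [indicator_of_mem ha, ← (condCDF ρ a).map_measure_eq_volume_restrict_Ioo (hcont a)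
        (tendsto_condCDF_atBot ρ a) (tendsto_condCDF_atTop ρ a),
        Measure.map_apply (hcont a).measurable ht]
      congr 1
      ext x
      simp [ha]
    · rw [indicator_of_notMem ha]
      convert measure_empty (μ := (condCDF ρ a).measure)
      ext x
      simp [ha]
  rw [Measure.map_apply hmeas (hs.prod ht),
    measure_eq_lintegral_measure_condCDF ρ (hmeas (hs.prod ht)),
    lintegral_congr hsection, lintegral_indicator_const hs, mul_comm]

end ProbabilityTheory

/-- If `X, Z` are real random variables and the conditional distribution
function `F_{X|Z}(·|z)` is continuous for every `z`, then `U = F_{X|Z}(X|Z)` is uniformly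
distributed on `(0,1)` and independent of `Z`. -/
theorem conditional_PIT_uniform_and_indep
    {Ω : Type*} {mΩ : MeasurableSpace Ω}
    (μ : Measure Ω) [IsProbabilityMeasure μ]
    (X Z : Ω → ℝ) (hX : Measurable X) (hZ : Measurable Z)
    (hXZcont : ∀ z : ℝ, Continuous fun x => condCDF (μ.map fun ω => (Z ω, X ω)) z x)
    (U : Ω → ℝ)
    (hU : U = fun ω => condCDF (μ.map fun ω' => (Z ω', X ω')) (Z ω) (X ω)) :
    μ.map U = volume.restrict (Set.Ioo (0 : ℝ) 1) ∧ IndepFun U Z μ := by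
  set ρ := μ.map fun ω => (Z ω, X ω)
  have hZX : Measurable fun ω => (Z ω, X ω) := hZ.prodMk hX
  have := Measure.isProbabilityMeasure_map (μ := μ) hZX.aemeasurable
  have := Measure.isProbabilityMeasure_map (μ := μ) hZ.aemeasurable
  have hφ := measurable_fst.prodMk (measurable_condCDF_uncurry_of_continuous ρ hXZcont)
  have hU_meas : Measurable U := hU ▸ measurable_snd.comp (hφ.comp hZX)
  have hlaw : μ.map (fun ω => (Z ω, U ω)) = (μ.map Z).prod (volume.restrict (Ioo 0 1)) :=
    calc μ.map (fun ω => (Z ω, U ω)) = ρ.map fun p => (p.1, condCDF ρ p.1 p.2) := by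
          rw [Measure.map_map hφ hZX, hU]
          rfl
      _ = (μ.map Z).prod (volume.restrict (Ioo 0 1)) := by
          rw [map_prodMk_condCDF_eq_prod ρ hXZcont, Measure.fst_map_prodMk hX]
  have hmapU : μ.map U = volume.restrict (Ioo 0 1) := by
    rw [← Measure.snd_map_prodMk hZ, hlaw, Measure.snd_prod]
  refine ⟨hmapU, IndepFun.symm ?_⟩
  rw [indepFun_iff_map_prod_eq_prod_map_map hZ.aemeasurable hU_meas.aemeasurable, hlaw, hmapU]
end

section
/- Suppose X and Y are real-valued random variables whose conditional distribution functions F_{X|Z}(·|z) and F_{Y|Z}(·|z) are continuous for every value z of Z. Then X is conditionally independent of Y given Z if and only if U = F_{X|Z}(X|Z) is conditionally independent of V = F_{Y|Z}(Y|Z) given Z. -/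
/-!
If `X ⫫ Y | Z` then also `(Z, X) ⫫ (Z, Y) | Z`, and `U`, `V` are measurable functions of
`(Z, X)`, `(Z, Y)`. Conversely, as `F_{X|Z}(·|z)` is continuous, the set where it is at most
`F_{X|Z}(x|z)` exceeds `(-∞, x]` only by an interval of conditional mass zero, so
`{X ≤ x} = {U ≤ F_{X|Z}(x|Z)}` up to a null set. Hence the generating events `{X ≤ x}` and
`{Y ≤ y}` are, up to null sets, events of `(Z, U)` and `(Z, V)`, and conditional independence of
the latter transfers to `X` and `Y`.
-/

open MeasureTheory ProbabilityTheory MeasurableSpace Set Filter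

namespace StieltjesFunction

theorem preimage_Iic_ae_eq_Iic (f : StieltjesFunction ℝ) (hf : Continuous f) (x : ℝ) :
    f ⁻¹' Iic (f x) =ᵐ[f.measure] Iic x := by
  refine ae_eq_set.2 ⟨?_, measure_mono_null (fun y hy => hy.2 (f.mono hy.1)) measure_empty⟩
  set S := f ⁻¹' Iic (f x) \ Iic x
  have hS : ∀ y ∈ S, x < y ∧ f y ≤ f x := fun y hy => ⟨not_le.1 hy.2, hy.1⟩
  rcases S.eq_empty_or_nonempty with hS_empty | hS_ne
  · rw [hS_empty, measure_empty]
  by_cases hbdd : BddAbove S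
  · have hsup : f (sSup S) ≤ f x :=
      closure_minimal sdiff_subset (isClosed_Iic.preimage hf) (csSup_mem_closure hS_ne hbdd)
    refine measure_mono_null (t := Ioc x (sSup S)) (fun y hy => ⟨(hS y hy).1, le_csSup hbdd hy⟩) ?_
    rwa [measure_Ioc, ENNReal.ofReal_eq_zero, sub_nonpos]
  · have hflat : ∀ y, x ≤ y → f y = f x := fun y hy =>
      let ⟨t, ht, hyt⟩ := not_bddAbove_iff.1 hbdd y
      le_antisymm ((f.mono hyt.le).trans (hS t ht).2) (f.mono hy)
    have hlim : Tendsto f atTop (nhds (f x)) :=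
      tendsto_const_nhds.congr' <| (eventually_ge_atTop x).mono fun y hy => (hflat y hy).symm
    refine measure_mono_null (t := Ioi x) (fun y hy => (hS y hy).1) ?_
    rw [f.measure_Ioi hlim, sub_self, ENNReal.ofReal_zero]

end StieltjesFunction

section CondCDF

variable {α : Type*} {mα : MeasurableSpace α} (ρ : Measure (α × ℝ))

theorem measurable_condCDF_uncurry (hρ : ∀ a, Continuous fun y => condCDF ρ a y) :
    Measurable fun p : α × ℝ => condCDF ρ p.1 p.2 :=
  (measurable_uncurry_of_continuous_of_measurable (u := fun y a => condCDF ρ a y) hρ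
    (measurable_condCDF ρ)).comp measurable_swap

variable [IsFiniteMeasure ρ]

theorem measure_eq_zero_of_forall_condCDF_measure_eq_zero {s : Set (α × ℝ)}
    (hs : MeasurableSet s) (h : ∀ a, (condCDF ρ a).measure (Prod.mk a ⁻¹' s) = 0) : ρ s = 0 := by
  -- disintegrate `ρ` as `ρ.fst ⊗ (fun a => (condCDF ρ a).measure)`
  change Kernel.const Unit ρ () s = 0
  rw [← lintegral_toKernel_mem (isCondKernelCDF_condCDF ρ) () hs]
  simp [IsCondKernelCDF.toKernel_apply, h]

theorem ae_eq_of_forall_condCDF_ae_eq {s t : Set (α × ℝ)} (hs : MeasurableSet s)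
    (ht : MeasurableSet t) (h : ∀ a, Prod.mk a ⁻¹' s =ᵐ[(condCDF ρ a).measure] Prod.mk a ⁻¹' t) :
    s =ᵐ[ρ] t :=
  ae_eq_set.2 ⟨
    measure_eq_zero_of_forall_condCDF_measure_eq_zero ρ (hs.diff ht) fun a => (ae_eq_set.1 (h a)).1,
    measure_eq_zero_of_forall_condCDF_measure_eq_zero ρ (ht.diff hs) fun a => (ae_eq_set.1 (h a)).2⟩

theorem setOf_condCDF_le_condCDF_ae_eq (hρ : ∀ a, Continuous fun y => condCDF ρ a y) (x : ℝ) :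
    {p : α × ℝ | condCDF ρ p.1 p.2 ≤ condCDF ρ p.1 x} =ᵐ[ρ] {p | p.2 ≤ x} :=
  ae_eq_of_forall_condCDF_ae_eq ρ
    (measurableSet_le (measurable_condCDF_uncurry ρ hρ)
      ((measurable_condCDF ρ x).comp measurable_fst))
    (measurableSet_le measurable_snd measurable_const)
    fun a => (condCDF ρ a).preimage_Iic_ae_eq_Iic (hρ a) x

theorem preimage_Iic_ae_eq_setOf_condCDF_le {Ω : Type*} {mΩ : MeasurableSpace Ω} (μ : Measure Ω)
    [IsFiniteMeasure μ] {X : Ω → ℝ} {Z : Ω → α} (hX : Measurable X) (hZ : Measurable Z)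
    (hcont : ∀ a, Continuous fun x => condCDF (μ.map fun ω => (Z ω, X ω)) a x) (x : ℝ) :
    X ⁻¹' Iic x =ᵐ[μ] {ω | condCDF (μ.map fun ω => (Z ω, X ω)) (Z ω) (X ω)
      ≤ condCDF (μ.map fun ω => (Z ω, X ω)) (Z ω) x} :=
  ((hZ.prodMk hX).quasiMeasurePreserving μ).preimage_ae_eq
    (setOf_condCDF_le_condCDF_ae_eq _ hcont x).symm

end CondCDF

namespace MeasurableSpace

variable {Ω : Type*}

theorem isPiSystem_image2_inter (m₁ m₂ : MeasurableSpace Ω) :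
    IsPiSystem (image2 (· ∩ ·) {s | MeasurableSet[m₁] s} {s | MeasurableSet[m₂] s}) := by
  rintro _ ⟨A, hA, S, hS, rfl⟩ _ ⟨B, hB, T, hT, rfl⟩ -
  exact ⟨A ∩ B, hA.inter hB, S ∩ T, hS.inter hT, (inter_inter_inter_comm A S B T).symm⟩

theorem generateFrom_image2_inter (m₁ m₂ : MeasurableSpace Ω) :
    generateFrom (image2 (· ∩ ·) {s | MeasurableSet[m₁] s} {s | MeasurableSet[m₂] s})
      = m₁ ⊔ m₂ := by
  refine le_antisymm (generateFrom_le ?_) (sup_le (fun A hA => ?_) (fun S hS => ?_))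
  · rintro _ ⟨A, hA, S, hS, rfl⟩
    exact (le_sup_left (b := m₂) _ hA).inter (le_sup_right (a := m₁) _ hS)
  · exact measurableSet_generateFrom ⟨A, hA, univ, @MeasurableSet.univ _ m₂, inter_univ A⟩
  · exact measurableSet_generateFrom ⟨univ, @MeasurableSet.univ _ m₁, S, hS, univ_inter S⟩

end MeasurableSpace

section CondIndep

variable {Ω : Type*} {m' mΩ : MeasurableSpace Ω} {μ : Measure Ω}

theorem condExp_congr_ae_set {s t : Set Ω} (hst : s =ᵐ[μ] t) : μ⟦s | m'⟧ =ᵐ[μ] μ⟦t | m'⟧ :=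
  condExp_congr_ae (indicator_ae_eq_of_ae_eq_set hst)

variable [IsFiniteMeasure μ]

theorem condExp_inter_ae_eq_indicator {S t : Set Ω} (hS : MeasurableSet[m'] S)
    (ht : MeasurableSet t) : μ⟦S ∩ t | m'⟧ =ᵐ[μ] S.indicator (μ⟦t | m'⟧) := by
  rw [← indicator_indicator]
  exact condExp_indicator ((integrable_const 1).indicator ht) hS

variable [StandardBorelSpace Ω] {hm' : m' ≤ mΩ}

theorem CondIndep.sup_left_of_le {m₀ m₁ m₂ : MeasurableSpace Ω} (h : CondIndep m' m₁ m₂ hm' μ)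
    (hm₁ : m₁ ≤ mΩ) (hm₂ : m₂ ≤ mΩ) (hm₀ : m₀ ≤ m') : CondIndep m' (m₁ ⊔ m₀) m₂ hm' μ := by
  refine CondIndepSets.condIndep (sup_le hm₁ (hm₀.trans hm')) hm₂ (isPiSystem_image2_inter m₁ m₀)
    (@isPiSystem_measurableSet Ω m₂) (generateFrom_image2_inter m₁ m₀).symm
    (@generateFrom_measurableSet Ω m₂).symm ?_
  rw [condIndep_iff _ _ _ _ hm₁ hm₂] at h
  refine (condIndepSets_iff (mΩ := mΩ) _ _ _ _ ?_ (fun B hB => hm₂ B hB) μ).2 ?_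
  · rintro _ ⟨A, hA, S, hS, rfl⟩
    exact (hm₁ A hA).inter (hm' S (hm₀ S hS))
  rintro _ B ⟨A, hA, S, hS, rfl⟩ hB
  have hS' : MeasurableSet[m'] S := hm₀ S hS
  have hAB : MeasurableSet[mΩ] (A ∩ B) := (hm₁ A hA).inter (hm₂ B hB)
  change μ⟦A ∩ S ∩ B | m'⟧ =ᵐ[μ] μ⟦A ∩ S | m'⟧ * μ⟦B | m'⟧
  rw [inter_comm A S, inter_assoc]
  filter_upwards [condExp_inter_ae_eq_indicator (μ := μ) hS' hAB, (h A B hA hB).indicator (s := S),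
    condExp_inter_ae_eq_indicator (μ := μ) hS' (hm₁ A hA)] with ω h₁ h₂ h₃
  rw [h₁, h₂, Pi.mul_apply, h₃]
  exact indicator_mul_left _ _ _

theorem CondIndepFun.prodMk_prodMk {β γ δ : Type*} [MeasurableSpace β] [MeasurableSpace γ]
    [MeasurableSpace δ] {X : Ω → β} {Y : Ω → γ} {Z : Ω → δ} (h : CondIndepFun m' hm' X Y μ)
    (hX : Measurable X) (hY : Measurable Y) (hZ : Measurable[m'] Z) :
    CondIndepFun m' hm' (fun ω => (Z ω, X ω)) (fun ω => (Z ω, Y ω)) μ := by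
  have hZX : MeasurableSpace.comap (fun ω => (Z ω, X ω)) inferInstance
      = MeasurableSpace.comap X inferInstance ⊔ MeasurableSpace.comap Z inferInstance :=
    (comap_prodMk Z X).trans (sup_comm _ _)
  have hZY : MeasurableSpace.comap (fun ω => (Z ω, Y ω)) inferInstance
      = MeasurableSpace.comap Y inferInstance ⊔ MeasurableSpace.comap Z inferInstance :=
    (comap_prodMk Z Y).trans (sup_comm _ _)
  have hXY : CondIndep m' (MeasurableSpace.comap X inferInstance)
      (MeasurableSpace.comap Y inferInstance) hm' μ := h
  rw [condIndepFun_iff_condIndep, hZX, hZY]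
  exact (CondIndep.sup_left_of_le (CondIndep.sup_left_of_le hXY hX.comap_le hY.comap_le
    hZ.comap_le).symm hY.comap_le (sup_le hX.comap_le (hZ.comap_le.trans hm')) hZ.comap_le).symm

theorem CondIndep.condIndepSets_of_ae_eq {m₁ m₂ : MeasurableSpace Ω} (h : CondIndep m' m₁ m₂ hm' μ)
    (hm₁ : m₁ ≤ mΩ) (hm₂ : m₂ ≤ mΩ) {p₁ p₂ : Set (Set Ω)}
    (hp₁m : ∀ s ∈ p₁, MeasurableSet[mΩ] s) (hp₂m : ∀ s ∈ p₂, MeasurableSet[mΩ] s)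
    (hp₁ : ∀ s ∈ p₁, ∃ t, MeasurableSet[m₁] t ∧ s =ᵐ[μ] t)
    (hp₂ : ∀ s ∈ p₂, ∃ t, MeasurableSet[m₂] t ∧ s =ᵐ[μ] t) :
    CondIndepSets m' hm' p₁ p₂ μ := by
  rw [condIndep_iff _ _ _ _ hm₁ hm₂] at h
  refine (condIndepSets_iff (mΩ := mΩ) _ _ _ _ hp₁m hp₂m μ).2 ?_
  intro s₁ s₂ hs₁ hs₂
  obtain ⟨t₁, ht₁, hst₁⟩ := hp₁ s₁ hs₁
  obtain ⟨t₂, ht₂, hst₂⟩ := hp₂ s₂ hs₂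
  filter_upwards [condExp_congr_ae_set (hst₁.inter hst₂), h t₁ t₂ ht₁ ht₂,
    condExp_congr_ae_set hst₁, condExp_congr_ae_set hst₂]
    with ω e₁₂ e e₁ e₂
  rw [e₁₂, e, Pi.mul_apply, Pi.mul_apply, e₁, e₂]

theorem CondIndepFun.of_preimage_Iic_ae_eq {β γ : Type*} [MeasurableSpace β] [MeasurableSpace γ]
    {f : Ω → β} {g : Ω → γ} (h : CondIndepFun m' hm' f g μ) (hf : Measurable f)
    (hg : Measurable g) {X Y : Ω → ℝ} (hX : Measurable X) (hY : Measurable Y)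
    (hXf : ∀ x, ∃ s, MeasurableSet s ∧ X ⁻¹' Iic x =ᵐ[μ] f ⁻¹' s)
    (hYg : ∀ y, ∃ t, MeasurableSet t ∧ Y ⁻¹' Iic y =ᵐ[μ] g ⁻¹' t) :
    CondIndepFun m' hm' X Y μ := by
  have hgen (W : Ω → ℝ) :
      MeasurableSpace.comap W inferInstance = generateFrom (preimage W '' range Iic) := by
    rw [← comap_generateFrom, ← borel_eq_generateFrom_Iic, ← BorelSpace.measurable_eq]
  refine CondIndepSets.condIndep hX.comap_le hY.comap_le (isPiSystem_Iic.comap X)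
    (isPiSystem_Iic.comap Y) (hgen X) (hgen Y) ?_
  refine CondIndep.condIndepSets_of_ae_eq h hf.comap_le hg.comap_le ?_ ?_ ?_ ?_
  · rintro _ ⟨_, ⟨x, rfl⟩, rfl⟩
    exact hX measurableSet_Iic
  · rintro _ ⟨_, ⟨y, rfl⟩, rfl⟩
    exact hY measurableSet_Iic
  · rintro _ ⟨_, ⟨x, rfl⟩, rfl⟩
    obtain ⟨s, hs, hXs⟩ := hXf x
    exact ⟨f ⁻¹' s, ⟨s, hs, rfl⟩, hXs⟩
  · rintro _ ⟨_, ⟨y, rfl⟩, rfl⟩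
    obtain ⟨t, ht, hYt⟩ := hYg y
    exact ⟨g ⁻¹' t, ⟨t, ht, rfl⟩, hYt⟩

end CondIndep

theorem condIndep_iff_condIndep_of_transforms_general
    {Ω : Type*} {mΩ : MeasurableSpace Ω} [StandardBorelSpace Ω]
    (μ : Measure Ω) [IsProbabilityMeasure μ]
    (X Y Z : Ω → ℝ) (hX : Measurable X) (hY : Measurable Y) (hZ : Measurable Z)
    (hXZcont : ∀ z : ℝ, Continuous fun x => condCDF (μ.map fun ω => (Z ω, X ω)) z x)
    (hYZcont : ∀ z : ℝ, Continuous fun y => condCDF (μ.map fun ω => (Z ω, Y ω)) z y)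
    (U V : Ω → ℝ)
    (hU : U = fun ω => condCDF (μ.map fun ω' => (Z ω', X ω')) (Z ω) (X ω))
    (hV : V = fun ω => condCDF (μ.map fun ω' => (Z ω', Y ω')) (Z ω) (Y ω)) :
    CondIndepFun (MeasurableSpace.comap Z inferInstance) hZ.comap_le X Y μ ↔
      CondIndepFun (MeasurableSpace.comap Z inferInstance) hZ.comap_le U V μ := by
  subst hU hV
  have hFX := measurable_condCDF_uncurry _ hXZcont
  have hFY := measurable_condCDF_uncurry _ hYZcont
  have hZ' : Measurable[MeasurableSpace.comap Z inferInstance] Z := comap_measurable Z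
  refine ⟨fun h => CondIndepFun.comp (CondIndepFun.prodMk_prodMk h hX hY hZ') hFX hFY, fun h => ?_⟩
  have hUm := hFX.comp (hZ.prodMk hX)
  have hVm := hFY.comp (hZ.prodMk hY)
  exact CondIndepFun.of_preimage_Iic_ae_eq (CondIndepFun.prodMk_prodMk h hUm hVm hZ')
    (hZ.prodMk hUm) (hZ.prodMk hVm) hX hY
    (fun x => ⟨_, measurableSet_le measurable_snd ((measurable_condCDF _ x).comp measurable_fst),
      preimage_Iic_ae_eq_setOf_condCDF_le μ hX hZ hXZcont x⟩)
    (fun y => ⟨_, measurableSet_le measurable_snd ((measurable_condCDF _ y).comp measurable_fst),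
      preimage_Iic_ae_eq_setOf_condCDF_le μ hY hZ hYZcont y⟩)

/-- Under continuity of the conditional distribution functions,
`X ⫫ Y | Z` if and only if `U = F_{X|Z}(X|Z)` and `V = F_{Y|Z}(Y|Z)` are conditionally
independent given `Z`. -/
theorem condIndep_iff_condIndep_of_transforms
    {Ω : Type*} {mΩ : MeasurableSpace Ω} [StandardBorelSpace Ω] [Nonempty Ω]
    (μ : Measure Ω) [IsProbabilityMeasure μ]
    (X Y Z : Ω → ℝ) (hX : Measurable X) (hY : Measurable Y) (hZ : Measurable Z)
    (hXZcont : ∀ z : ℝ, Continuous fun x => condCDF (μ.map fun ω => (Z ω, X ω)) z x)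
    (hYZcont : ∀ z : ℝ, Continuous fun y => condCDF (μ.map fun ω => (Z ω, Y ω)) z y)
    (U V : Ω → ℝ)
    (hU : U = fun ω => condCDF (μ.map fun ω' => (Z ω', X ω')) (Z ω) (X ω))
    (hV : V = fun ω => condCDF (μ.map fun ω' => (Z ω', Y ω')) (Z ω) (Y ω)) :
    CondIndepFun (MeasurableSpace.comap Z inferInstance) hZ.comap_le X Y μ ↔
      CondIndepFun (MeasurableSpace.comap Z inferInstance) hZ.comap_le U V μ :=
  condIndep_iff_condIndep_of_transforms_general (mΩ := mΩ) μ X Y Z hX hY hZ hXZcont hYZcont U V hU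
    hV
end

section
/- Let (U,V,W) be a triple of real-valued random variables with U independent of W and V independent of W, and let (U_k,V_k,W_k), k = 1,2,3,4 be four independent copies of (U,V,W). Then E[e^{-|U₁−U₂|−|V₁−V₂|−|W₁−W₂|}] − 2E[e^{-|U₁−U₃|−|V₁−V₄|−|W₁−W₂|}] + E[e^{-|U₁−U₂|}]·E[e^{-|V₁−V₂|}]·E[e^{-|W₁−W₂|}] = E[S_U(U₁,U₂) S_V(V₁,V₂) e^{-|W₁−W₂|}], where S_U(u₁,u₂) = E[e^{-|u₁−u₂|} + e^{-|U₃−U₄|} − e^{-|u₁−U₃|} − e^{-|u₂−U₃|}] and S_V is defined analogously from V. -/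
/-!
Write `m_P x = ∫ k x y ∂P` and `A_P = ∫∫ k ∂P ∂P` for the kernel `k x y = exp (-|x - y|)`, so
that `S_P x y = k x y + A_P - m_P x - m_P y` is the doubly centred kernel and
`∫ S_P x y ∂P(y) = 0`. Integrate the right-hand side first over the second copy `y`. Since `U` and
`V` are independent of `W`, every term in which `S_U` or `S_V` stands alone against `k w W`
vanishes, and what remains is
`E[(k u U - m_U U) (k v V - m_V V) k w W] - (m_U u - A_U) (m_V v - A_V) m_W w`.
Integrating over the first copy with the same factorisation turns the two pieces into `T - M` and
`M - A_U A_V A_W`, where `T` is the first expectation on the left and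
`M = E[m_U U * m_V V * m_W W]`; the four-copy expectation on the left equals `M` as well.
-/

open MeasureTheory ProbabilityTheory Real Function
open scoped ENNReal

section

variable {α : Type*} [MeasurableSpace α]

noncomputable def kernelMean (k : α → α → ℝ) (P : Measure α) (x : α) : ℝ := ∫ y, k x y ∂P

noncomputable def kernelEnergy (k : α → α → ℝ) (P : Measure α) : ℝ :=
  ∫ p, k p.1 p.2 ∂(P.prod P)

noncomputable def doubleCenter (k : α → α → ℝ) (P : Measure α) (x y : α) : ℝ :=
  k x y + kernelEnergy k P - kernelMean k P x - kernelMean k P y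

section Kernel

variable {k : α → α → ℝ} {C : ℝ} {P : Measure α} {β : Type*} [MeasurableSpace β]
  {μ : Measure β} {f g : β → α}

lemma integrable_mul_of_memLp_top [IsFiniteMeasure μ] {φ ψ : β → ℝ} (hφ : MemLp φ ∞ μ)
    (hψ : MemLp ψ ∞ μ) : Integrable (fun x => φ x * ψ x) μ :=
  (hψ.mul' (r := ∞) hφ).integrable le_top

lemma integrable_mul_mul_of_memLp_top [IsFiniteMeasure μ] {φ ψ χ : β → ℝ} (hφ : MemLp φ ∞ μ)
    (hψ : MemLp ψ ∞ μ) (hχ : MemLp χ ∞ μ) : Integrable (fun x => φ x * ψ x * χ x) μ :=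
  (hχ.mul' (r := ∞) (hψ.mul' (r := ∞) hφ)).integrable le_top

lemma measurable_kernelMean [SFinite P] (hk : Measurable (uncurry k)) :
    Measurable (kernelMean k P) :=
  hk.stronglyMeasurable.integral_prod_right'.measurable

lemma abs_kernelMean_le [IsProbabilityMeasure P] (hC : ∀ x y, |k x y| ≤ C) (x : α) :
    |kernelMean k P x| ≤ C := by
  simpa [kernelMean] using norm_integral_le_of_norm_le_const (μ := P)
    (ae_of_all _ fun y => (norm_eq_abs _).trans_le (hC x y))

lemma memLp_top_kernel (hk : Measurable (uncurry k)) (hC : ∀ x y, |k x y| ≤ C)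
    (hf : Measurable f) (hg : Measurable g) : MemLp (fun x => k (f x) (g x)) ∞ μ :=
  memLp_top_of_bound (hk.comp (hf.prodMk hg)).aestronglyMeasurable C
    (ae_of_all _ fun _ => hC _ _)

lemma memLp_top_kernelMean [IsProbabilityMeasure P] (hk : Measurable (uncurry k))
    (hC : ∀ x y, |k x y| ≤ C) (hf : Measurable f) :
    MemLp (fun x => kernelMean k P (f x)) ∞ μ :=
  memLp_top_of_bound ((measurable_kernelMean hk).comp hf).aestronglyMeasurable C
    (ae_of_all _ fun _ => abs_kernelMean_le hC _)

lemma memLp_top_kernel_sub_kernelMean [IsProbabilityMeasure P] (hk : Measurable (uncurry k))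
    (hC : ∀ x y, |k x y| ≤ C) (hf : Measurable f) (hg : Measurable g) :
    MemLp (fun x => k (f x) (g x) - kernelMean k P (g x)) ∞ μ :=
  (memLp_top_kernel hk hC hf hg).sub (memLp_top_kernelMean hk hC hg)

lemma memLp_top_doubleCenter [IsFiniteMeasure μ] [IsProbabilityMeasure P]
    (hk : Measurable (uncurry k)) (hC : ∀ x y, |k x y| ≤ C) (hf : Measurable f)
    (hg : Measurable g) : MemLp (fun x => doubleCenter k P (f x) (g x)) ∞ μ :=
  (((memLp_top_kernel hk hC hf hg).add (memLp_const _)).sub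
    (memLp_top_kernelMean hk hC hf)).sub (memLp_top_kernelMean hk hC hg)

lemma integral_kernelMean [IsProbabilityMeasure P] (hk : Measurable (uncurry k))
    (hC : ∀ x y, |k x y| ≤ C) : ∫ x, kernelMean k P x ∂P = kernelEnergy k P :=
  (integral_prod _ ((memLp_top_kernel hk hC measurable_fst measurable_snd).integrable le_top)).symm

lemma integral_kernel_sub_kernelMean [IsProbabilityMeasure P] (hk : Measurable (uncurry k))
    (hC : ∀ x y, |k x y| ≤ C) (u : α) :
    ∫ y, (k u y - kernelMean k P y) ∂P = kernelMean k P u - kernelEnergy k P := by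
  rw [integral_sub ((memLp_top_kernel hk hC measurable_const measurable_id').integrable le_top)
    ((memLp_top_kernelMean hk hC measurable_id').integrable le_top), integral_kernelMean hk hC]
  rfl

lemma integral_prod_eq_doubleCenter [IsProbabilityMeasure P] (hk : Measurable (uncurry k))
    (hC : ∀ x y, |k x y| ≤ C) (x y : α) :
    ∫ p, (k x y + k p.1 p.2 - k x p.1 - k y p.1) ∂(P.prod P) = doubleCenter k P x y := by
  have hint : ∀ a, Integrable (fun p : α × α => k a p.1) (P.prod P) := fun a =>
    (memLp_top_kernel hk hC measurable_const measurable_fst).integrable le_top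
  have hmean : ∀ a, ∫ p, k a p.1 ∂(P.prod P) = kernelMean k P a := fun a => by
    simpa [kernelMean] using integral_fun_fst (μ := P) (ν := P) (fun b => k a b)
  have hkk : Integrable (fun p : α × α => k p.1 p.2) (P.prod P) :=
    (memLp_top_kernel hk hC measurable_fst measurable_snd).integrable le_top
  have hsum : Integrable (fun p : α × α => k x y + k p.1 p.2) (P.prod P) :=
    (integrable_const _).add hkk
  rw [integral_sub ?_ (hint y), integral_sub hsum (hint x),
    integral_add (integrable_const _) hkk, hmean, hmean]
  · simp [doubleCenter, kernelEnergy]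
  · exact hsum.sub (hint x)

lemma integral_doubleCenter_right [IsProbabilityMeasure P] (hk : Measurable (uncurry k))
    (hC : ∀ x y, |k x y| ≤ C) (x : α) : ∫ y, doubleCenter k P x y ∂P = 0 := by
  have h : ∀ y, doubleCenter k P x y =
      (k x y - kernelMean k P y) - (kernelMean k P x - kernelEnergy k P) := fun y => by
    unfold doubleCenter; ring
  simp_rw [h]
  rw [integral_sub ((memLp_top_kernel_sub_kernelMean hk hC measurable_const
    measurable_id').integrable le_top) (integrable_const _), integral_kernel_sub_kernelMean hk hC,
    integral_const]
  simp

end Kernel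

section Independence

variable {Ω γ : Type*} [MeasurableSpace Ω] [MeasurableSpace γ] {ν : Measure Ω}
  {X : Ω → α} {Y : Ω → γ} {P : Measure α} {Q : Measure γ}

lemma integral_mul_of_map_eq_prod [SFinite P] [SFinite Q] (hX : Measurable X)
    (hY : Measurable Y) (hXY : ν.map (fun ω => (X ω, Y ω)) = P.prod Q) {φ : α → ℝ}
    {ψ : γ → ℝ} (hφ : Measurable φ) (hψ : Measurable ψ) :
    ∫ ω, φ (X ω) * ψ (Y ω) ∂ν = (∫ a, φ a ∂P) * ∫ b, ψ b ∂Q := by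
  rw [← integral_prod_mul, ← hXY, integral_map (hX.prodMk hY).aemeasurable (by fun_prop)]

lemma integral_comp_left_of_map_eq_prod [SFinite P] [IsProbabilityMeasure Q] (hX : Measurable X)
    (hY : Measurable Y) (hXY : ν.map (fun ω => (X ω, Y ω)) = P.prod Q) {φ : α → ℝ}
    (hφ : Measurable φ) : ∫ ω, φ (X ω) ∂ν = ∫ a, φ a ∂P := by
  simpa using integral_mul_of_map_eq_prod hX hY hXY hφ (measurable_const (a := (1 : ℝ)))

lemma integral_comp_right_of_map_eq_prod [IsProbabilityMeasure P] [SFinite Q] (hX : Measurable X)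
    (hY : Measurable Y) (hXY : ν.map (fun ω => (X ω, Y ω)) = P.prod Q) {ψ : γ → ℝ}
    (hψ : Measurable ψ) : ∫ ω, ψ (Y ω) ∂ν = ∫ b, ψ b ∂Q := by
  simpa using integral_mul_of_map_eq_prod hX hY hXY (measurable_const (a := (1 : ℝ))) hψ

lemma integral_doubleCenter_mul_of_map_eq_prod [IsProbabilityMeasure P] [SFinite Q]
    {k : α → α → ℝ} {C : ℝ} (hk : Measurable (uncurry k)) (hC : ∀ x y, |k x y| ≤ C)
    (hX : Measurable X) (hY : Measurable Y) (hXY : ν.map (fun ω => (X ω, Y ω)) = P.prod Q)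
    {ψ : γ → ℝ} (hψ : Measurable ψ) (u : α) :
    ∫ ω, doubleCenter k P u (X ω) * ψ (Y ω) ∂ν = 0 := by
  have hS : Measurable (doubleCenter k P u) := by
    have := measurable_kernelMean (P := P) hk
    have : Measurable (k u) := hk.of_uncurry_left
    unfold doubleCenter
    fun_prop
  rw [integral_mul_of_map_eq_prod hX hY hXY hS hψ, integral_doubleCenter_right hk hC, zero_mul]

end Independence

section Triple

variable {k : α → α → ℝ} {C : ℝ} {ν : Measure (α × α × α)} [IsProbabilityMeasure ν]
  {P₁ P₂ P₃ : Measure α} [IsProbabilityMeasure P₁] [IsProbabilityMeasure P₂]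
  [IsProbabilityMeasure P₃]

lemma integral_doubleCenter_mul_doubleCenter_mul_kernel (hk : Measurable (uncurry k))
    (hC : ∀ x y, |k x y| ≤ C) (h₁₃ : ν.map (fun x => (x.1, x.2.2)) = P₁.prod P₃)
    (h₂₃ : ν.map (fun x => (x.2.1, x.2.2)) = P₂.prod P₃) (u v w : α) :
    ∫ y, doubleCenter k P₁ u y.1 * doubleCenter k P₂ v y.2.1 * k w y.2.2 ∂ν =
      ∫ y, (k u y.1 - kernelMean k P₁ y.1) * (k v y.2.1 - kernelMean k P₂ y.2.1) * k w y.2.2 ∂ν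
        - (kernelMean k P₁ u - kernelEnergy k P₁) * (kernelMean k P₂ v - kernelEnergy k P₂)
          * kernelMean k P₃ w := by
  set a := kernelMean k P₁ u - kernelEnergy k P₁
  set b := kernelMean k P₂ v - kernelEnergy k P₂
  have hc : MemLp (fun y : α × α × α => k w y.2.2) ∞ ν :=
    memLp_top_kernel hk hC measurable_const (by fun_prop)
  have hDDc := integrable_mul_mul_of_memLp_top
    (memLp_top_kernel_sub_kernelMean (P := P₁) hk hC (measurable_const (a := u)) measurable_fst)
    (memLp_top_kernel_sub_kernelMean (P := P₂) hk hC (measurable_const (a := v))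
      measurable_snd.fst) hc
  have hS₁c := integrable_mul_of_memLp_top
    (memLp_top_doubleCenter (P := P₁) hk hC (measurable_const (a := u)) measurable_fst) hc
  have hS₂c := integrable_mul_of_memLp_top
    (memLp_top_doubleCenter (P := P₂) hk hC (measurable_const (a := v)) measurable_snd.fst) hc
  have hS₁0 : ∫ y, doubleCenter k P₁ u y.1 * k w y.2.2 ∂ν = 0 :=
    integral_doubleCenter_mul_of_map_eq_prod hk hC measurable_fst (by fun_prop) h₁₃
      hk.of_uncurry_left u
  have hS₂0 : ∫ y, doubleCenter k P₂ v y.2.1 * k w y.2.2 ∂ν = 0 :=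
    integral_doubleCenter_mul_of_map_eq_prod hk hC (by fun_prop) (by fun_prop) h₂₃
      hk.of_uncurry_left v
  have hc₃ : ∫ y, k w y.2.2 ∂ν = kernelMean k P₃ w :=
    integral_comp_right_of_map_eq_prod measurable_fst (by fun_prop) h₁₃ hk.of_uncurry_left
  calc ∫ y, doubleCenter k P₁ u y.1 * doubleCenter k P₂ v y.2.1 * k w y.2.2 ∂ν
      = ∫ y, ((k u y.1 - kernelMean k P₁ y.1) * (k v y.2.1 - kernelMean k P₂ y.2.1) * k w y.2.2
          - a * (doubleCenter k P₂ v y.2.1 * k w y.2.2)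
          - b * (doubleCenter k P₁ u y.1 * k w y.2.2) - a * b * k w y.2.2) ∂ν := by
        congr 1; funext y; simp only [doubleCenter, a, b]; ring
    _ = _ := by
        rw [integral_sub ?_ ((hc.integrable le_top).const_mul _), integral_sub ?_
          (hS₁c.const_mul b), integral_sub hDDc (hS₂c.const_mul a), integral_const_mul,
          integral_const_mul, integral_const_mul, hS₁0, hS₂0, hc₃]
        · ring
        · exact hDDc.sub (hS₂c.const_mul a)
        · exact (hDDc.sub (hS₂c.const_mul a)).sub (hS₁c.const_mul b)

lemma integral_kernel_sub_mul_kernel_sub_mul_kernel (hk : Measurable (uncurry k))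
    (hC : ∀ x y, |k x y| ≤ C) (hsymm : ∀ x y, k x y = k y x)
    (h₁₃ : ν.map (fun x => (x.1, x.2.2)) = P₁.prod P₃)
    (h₂₃ : ν.map (fun x => (x.2.1, x.2.2)) = P₂.prod P₃) (u v w : α) :
    ∫ x, (k x.1 u - kernelMean k P₁ u) * (k x.2.1 v - kernelMean k P₂ v) * k x.2.2 w ∂ν =
      ∫ x, k x.1 u * k x.2.1 v * k x.2.2 w ∂ν
        - kernelMean k P₁ u * kernelMean k P₂ v * kernelMean k P₃ w := by
  have hmean : ∀ (P : Measure α) (a : α), ∫ b, k b a ∂P = kernelMean k P a := fun P a => by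
    simp_rw [hsymm _ a]; rfl
  have hK : ∀ (a : α) {X : α × α × α → α}, Measurable X →
      MemLp (fun x => k (X x) a) ∞ ν := fun a X hX => memLp_top_kernel hk hC hX measurable_const
  have hπ₁ : Measurable fun x : α × α × α => x.1 := measurable_fst
  have hπ₂ : Measurable fun x : α × α × α => x.2.1 := by fun_prop
  have hπ₃ : Measurable fun x : α × α × α => x.2.2 := by fun_prop
  have hkkc := integrable_mul_mul_of_memLp_top (hK u hπ₁) (hK v hπ₂) (hK w hπ₃)
  have hkc₁ := integrable_mul_of_memLp_top (hK u hπ₁) (hK w hπ₃)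
  have hkc₂ := integrable_mul_of_memLp_top (hK v hπ₂) (hK w hπ₃)
  have h₁ : ∫ x, k x.1 u * k x.2.2 w ∂ν = kernelMean k P₁ u * kernelMean k P₃ w := by
    rw [integral_mul_of_map_eq_prod hπ₁ hπ₃ h₁₃ hk.of_uncurry_right hk.of_uncurry_right,
      hmean, hmean]
  have h₂ : ∫ x, k x.2.1 v * k x.2.2 w ∂ν = kernelMean k P₂ v * kernelMean k P₃ w := by
    rw [integral_mul_of_map_eq_prod hπ₂ hπ₃ h₂₃ hk.of_uncurry_right hk.of_uncurry_right,
      hmean, hmean]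
  have h₃ : ∫ x, k x.2.2 w ∂ν = kernelMean k P₃ w := by
    rw [integral_comp_right_of_map_eq_prod hπ₁ hπ₃ h₁₃ hk.of_uncurry_right, hmean]
  calc ∫ x, (k x.1 u - kernelMean k P₁ u) * (k x.2.1 v - kernelMean k P₂ v) * k x.2.2 w ∂ν
      = ∫ x, (k x.1 u * k x.2.1 v * k x.2.2 w - kernelMean k P₂ v * (k x.1 u * k x.2.2 w)
          - kernelMean k P₁ u * (k x.2.1 v * k x.2.2 w)
          + kernelMean k P₁ u * kernelMean k P₂ v * k x.2.2 w) ∂ν := by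
        congr 1; funext x; ring
    _ = _ := by
        rw [integral_add ?_ (((hK w hπ₃).integrable le_top).const_mul _), integral_sub ?_
          (hkc₂.const_mul _), integral_sub hkkc (hkc₁.const_mul _), integral_const_mul,
          integral_const_mul, integral_const_mul, h₁, h₂, h₃]
        · ring
        · exact hkkc.sub (hkc₁.const_mul _)
        · exact (hkkc.sub (hkc₁.const_mul _)).sub (hkc₂.const_mul _)

lemma integrable_kernel_sub_mul_kernel_sub_mul_kernel_prod (hk : Measurable (uncurry k))
    (hC : ∀ x y, |k x y| ≤ C) :
    Integrable (fun p : (α × α × α) × (α × α × α) =>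
      (k p.1.1 p.2.1 - kernelMean k P₁ p.2.1) * (k p.1.2.1 p.2.2.1 - kernelMean k P₂ p.2.2.1)
        * k p.1.2.2 p.2.2.2) (ν.prod ν) :=
  integrable_mul_mul_of_memLp_top
    (memLp_top_kernel_sub_kernelMean hk hC measurable_fst.fst measurable_snd.fst)
    (memLp_top_kernel_sub_kernelMean hk hC measurable_fst.snd.fst measurable_snd.snd.fst)
    (memLp_top_kernel hk hC measurable_fst.snd.snd measurable_snd.snd.snd)

lemma integral_kernel_sub_mul_kernel_sub_mul_kernel_prod (hk : Measurable (uncurry k))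
    (hC : ∀ x y, |k x y| ≤ C) (hsymm : ∀ x y, k x y = k y x)
    (h₁₃ : ν.map (fun x => (x.1, x.2.2)) = P₁.prod P₃)
    (h₂₃ : ν.map (fun x => (x.2.1, x.2.2)) = P₂.prod P₃) :
    ∫ p, (k p.1.1 p.2.1 - kernelMean k P₁ p.2.1) * (k p.1.2.1 p.2.2.1 - kernelMean k P₂ p.2.2.1)
        * k p.1.2.2 p.2.2.2 ∂(ν.prod ν) =
      ∫ p, k p.1.1 p.2.1 * k p.1.2.1 p.2.2.1 * k p.1.2.2 p.2.2.2 ∂(ν.prod ν)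
        - ∫ x, kernelMean k P₁ x.1 * kernelMean k P₂ x.2.1 * kernelMean k P₃ x.2.2 ∂ν := by
  have hkkk := integrable_mul_mul_of_memLp_top (μ := ν.prod ν)
    (memLp_top_kernel hk hC measurable_fst.fst measurable_snd.fst)
    (memLp_top_kernel hk hC measurable_fst.snd.fst measurable_snd.snd.fst)
    (memLp_top_kernel hk hC measurable_fst.snd.snd measurable_snd.snd.snd)
  have hmmm := integrable_mul_mul_of_memLp_top (μ := ν)
    (memLp_top_kernelMean (P := P₁) hk hC measurable_fst)
    (memLp_top_kernelMean (P := P₂) hk hC measurable_snd.fst)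
    (memLp_top_kernelMean (P := P₃) hk hC measurable_snd.snd)
  rw [integral_prod_symm _ (integrable_kernel_sub_mul_kernel_sub_mul_kernel_prod hk hC),
    integral_prod_symm _ hkkk, ← integral_sub hkkk.integral_prod_right hmmm]
  simp only [integral_kernel_sub_mul_kernel_sub_mul_kernel hk hC hsymm h₁₃ h₂₃]

lemma integral_kernelMean_sub_mul_kernelMean_sub_mul_kernelMean (hk : Measurable (uncurry k))
    (hC : ∀ x y, |k x y| ≤ C) (h₁₃ : ν.map (fun x => (x.1, x.2.2)) = P₁.prod P₃)
    (h₂₃ : ν.map (fun x => (x.2.1, x.2.2)) = P₂.prod P₃) :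
    ∫ x, (kernelMean k P₁ x.1 - kernelEnergy k P₁) * (kernelMean k P₂ x.2.1 - kernelEnergy k P₂)
        * kernelMean k P₃ x.2.2 ∂ν =
      ∫ x, kernelMean k P₁ x.1 * kernelMean k P₂ x.2.1 * kernelMean k P₃ x.2.2 ∂ν
        - kernelEnergy k P₁ * kernelEnergy k P₂ * kernelEnergy k P₃ := by
  have hm₁ := memLp_top_kernelMean (P := P₁) (μ := ν) hk hC measurable_fst
  have hm₂ := memLp_top_kernelMean (P := P₂) (μ := ν) hk hC measurable_snd.fst
  have hm₃ := memLp_top_kernelMean (P := P₃) (μ := ν) hk hC measurable_snd.snd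
  have hmmm := integrable_mul_mul_of_memLp_top hm₁ hm₂ hm₃
  have hmm := integrable_mul_of_memLp_top hm₂ hm₃
  have hm'm := integrable_mul_of_memLp_top (hm₁.sub (memLp_const (kernelEnergy k P₁))) hm₃
  have hcentered : ∫ a, (kernelMean k P₁ a - kernelEnergy k P₁) ∂P₁ = 0 := by
    rw [integral_sub ((memLp_top_kernelMean hk hC measurable_id').integrable le_top)
      (integrable_const _), integral_kernelMean hk hC, integral_const]
    simp
  have h₂ : ∫ x, kernelMean k P₂ x.2.1 * kernelMean k P₃ x.2.2 ∂ν =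
      kernelEnergy k P₂ * kernelEnergy k P₃ := by
    rw [integral_mul_of_map_eq_prod measurable_snd.fst measurable_snd.snd h₂₃
      (measurable_kernelMean hk) (measurable_kernelMean hk), integral_kernelMean hk hC,
      integral_kernelMean hk hC]
  have h₁ : ∫ x, (kernelMean k P₁ x.1 - kernelEnergy k P₁) * kernelMean k P₃ x.2.2 ∂ν = 0 := by
    rw [integral_mul_of_map_eq_prod measurable_fst measurable_snd.snd h₁₃
      ((measurable_kernelMean hk).sub_const _) (measurable_kernelMean hk), hcentered, zero_mul]
  calc _ = ∫ x, (kernelMean k P₁ x.1 * kernelMean k P₂ x.2.1 * kernelMean k P₃ x.2.2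
          - kernelEnergy k P₁ * (kernelMean k P₂ x.2.1 * kernelMean k P₃ x.2.2)
          - kernelEnergy k P₂ * ((kernelMean k P₁ x.1 - kernelEnergy k P₁)
            * kernelMean k P₃ x.2.2)) ∂ν := by
        congr 1; funext x; ring
    _ = _ := by
        rw [integral_sub ?_ ?_, integral_sub hmmm (hmm.const_mul _), integral_const_mul,
          integral_const_mul, h₁, h₂]
        · ring
        · exact hmmm.sub (hmm.const_mul _)
        · exact hm'm.const_mul _

lemma integral_kernel_mul_kernel_mul_kernel_four_copies (hk : Measurable (uncurry k))
    (hC : ∀ x y, |k x y| ≤ C) (h₁₃ : ν.map (fun x => (x.1, x.2.2)) = P₁.prod P₃)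
    (h₂₃ : ν.map (fun x => (x.2.1, x.2.2)) = P₂.prod P₃) :
    ∫ q, k q.1.1 q.2.2.1.1 * k q.1.2.1 q.2.2.2.2.1 * k q.1.2.2 q.2.1.2.2
        ∂(ν.prod (ν.prod (ν.prod ν))) =
      ∫ x, kernelMean k P₁ x.1 * kernelMean k P₂ x.2.1 * kernelMean k P₃ x.2.2 ∂ν := by
  have hkkk := integrable_mul_mul_of_memLp_top (μ := ν.prod (ν.prod (ν.prod ν)))
    (memLp_top_kernel hk hC measurable_fst.fst measurable_snd.snd.fst.fst)
    (memLp_top_kernel hk hC measurable_fst.snd.fst measurable_snd.snd.snd.snd.fst)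
    (memLp_top_kernel hk hC measurable_fst.snd.snd measurable_snd.fst.snd.snd)
  have h₁ : ∀ a, ∫ y, k a y.1 ∂ν = kernelMean k P₁ a := fun a =>
    integral_comp_left_of_map_eq_prod measurable_fst measurable_snd.snd h₁₃ hk.of_uncurry_left
  have h₂ : ∀ a, ∫ y, k a y.2.1 ∂ν = kernelMean k P₂ a := fun a =>
    integral_comp_left_of_map_eq_prod measurable_snd.fst measurable_snd.snd h₂₃
      hk.of_uncurry_left
  have h₃ : ∀ a, ∫ y, k a y.2.2 ∂ν = kernelMean k P₃ a := fun a =>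
    integral_comp_right_of_map_eq_prod measurable_fst measurable_snd.snd h₁₃ hk.of_uncurry_left
  rw [integral_prod _ hkkk]
  congr 1; funext x
  calc _ = ∫ r : (α × α × α) × (α × α × α) × (α × α × α),
          k x.2.2 r.1.2.2 * (k x.1 r.2.1.1 * k x.2.1 r.2.2.2.1) ∂(ν.prod (ν.prod ν)) := by
        congr 1; funext r; ring
    _ = _ := by
        rw [integral_prod_mul (fun y : α × α × α => k x.2.2 y.2.2)
          (fun s : (α × α × α) × (α × α × α) => k x.1 s.1.1 * k x.2.1 s.2.2.1),
          integral_prod_mul (fun z : α × α × α => k x.1 z.1) (fun t : α × α × α => k x.2.1 t.2.1),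
          h₁, h₂, h₃]
        ring

theorem integral_doubleCenter_mul_doubleCenter_mul_kernel_prod (hk : Measurable (uncurry k))
    (hC : ∀ x y, |k x y| ≤ C) (hsymm : ∀ x y, k x y = k y x)
    (h₁₃ : ν.map (fun x => (x.1, x.2.2)) = P₁.prod P₃)
    (h₂₃ : ν.map (fun x => (x.2.1, x.2.2)) = P₂.prod P₃) :
    ∫ p, doubleCenter k P₁ p.1.1 p.2.1 * doubleCenter k P₂ p.1.2.1 p.2.2.1 * k p.1.2.2 p.2.2.2
        ∂(ν.prod ν) =
      (∫ p, k p.1.1 p.2.1 * k p.1.2.1 p.2.2.1 * k p.1.2.2 p.2.2.2 ∂(ν.prod ν))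
        - 2 * (∫ q, k q.1.1 q.2.2.1.1 * k q.1.2.1 q.2.2.2.2.1 * k q.1.2.2 q.2.1.2.2
          ∂(ν.prod (ν.prod (ν.prod ν))))
        + kernelEnergy k P₁ * kernelEnergy k P₂ * kernelEnergy k P₃ := by
  have hSSk := integrable_mul_mul_of_memLp_top (μ := ν.prod ν)
    (memLp_top_doubleCenter (P := P₁) hk hC measurable_fst.fst measurable_snd.fst)
    (memLp_top_doubleCenter (P := P₂) hk hC measurable_fst.snd.fst measurable_snd.snd.fst)
    (memLp_top_kernel hk hC measurable_fst.snd.snd measurable_snd.snd.snd)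
  have hDDk := integrable_kernel_sub_mul_kernel_sub_mul_kernel_prod (ν := ν) (P₁ := P₁)
    (P₂ := P₂) hk hC
  have hmmm := integrable_mul_mul_of_memLp_top (μ := ν)
    ((memLp_top_kernelMean (P := P₁) hk hC measurable_fst).sub (memLp_const (kernelEnergy k P₁)))
    ((memLp_top_kernelMean (P := P₂) hk hC measurable_snd.fst).sub
      (memLp_const (kernelEnergy k P₂)))
    (memLp_top_kernelMean (P := P₃) hk hC measurable_snd.snd)
  rw [integral_prod _ hSSk]
  simp only [integral_doubleCenter_mul_doubleCenter_mul_kernel hk hC h₁₃ h₂₃]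
  rw [integral_sub hDDk.integral_prod_left ?_, ← integral_prod _ hDDk,
    integral_kernel_sub_mul_kernel_sub_mul_kernel_prod hk hC hsymm h₁₃ h₂₃,
    integral_kernelMean_sub_mul_kernelMean_sub_mul_kernelMean hk hC h₁₃ h₂₃,
    integral_kernel_mul_kernel_mul_kernel_four_copies hk hC h₁₃ h₂₃]
  · ring
  · exact hmmm

end Triple

end

lemma measurable_exp_neg_abs_sub : Measurable (uncurry fun x y : ℝ => exp (-|x - y|)) := by
  change Measurable fun p : ℝ × ℝ => exp (-|p.1 - p.2|)
  fun_prop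

lemma abs_exp_neg_abs_sub_le_one (x y : ℝ) : |exp (-|x - y|)| ≤ 1 := by
  rw [abs_of_pos (exp_pos _), exp_le_one_iff, neg_nonpos]
  exact abs_nonneg _

/-- If `U ⫫ W` and `V ⫫ W`, then, with `(U_k,V_k,W_k)`, `k = 1,2,3,4`,
independent copies of `(U,V,W)` (expectations in the copies being integrals against products
of the joint law `ν`),
`E[e^{-|U₁−U₂|−|V₁−V₂|−|W₁−W₂|}] − 2 E[e^{-|U₁−U₃|−|V₁−V₄|−|W₁−W₂|}]
  + E[e^{-|U₁−U₂|}] E[e^{-|V₁−V₂|}] E[e^{-|W₁−W₂|}]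
  = E[S_U(U₁,U₂) S_V(V₁,V₂) e^{-|W₁−W₂|}]`,
where `S_U(u₁,u₂) = E[e^{-|u₁−u₂|} + e^{-|U₃−U₄|} − e^{-|u₁−U₃|} − e^{-|u₂−U₃|}]` and `S_V`
is defined analogously. -/
theorem expectation_form_eq_SU_SV_form
    {Ω : Type*} {mΩ : MeasurableSpace Ω}
    (μ : Measure Ω) [IsProbabilityMeasure μ]
    (U V W : Ω → ℝ) (hU : Measurable U) (hV : Measurable V) (hW : Measurable W)
    (hUW : IndepFun U W μ) (hVW : IndepFun V W μ)
    (ν : Measure (ℝ × ℝ × ℝ)) (hν : ν = μ.map (fun ω => (U ω, V ω, W ω)))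
    (SU SV : ℝ → ℝ → ℝ)
    (hSU : SU = fun u₁ u₂ => ∫ p : ℝ × ℝ,
      (Real.exp (-|u₁ - u₂|) + Real.exp (-|p.1 - p.2|) -
        Real.exp (-|u₁ - p.1|) - Real.exp (-|u₂ - p.1|)) ∂((μ.map U).prod (μ.map U)))
    (hSV : SV = fun v₁ v₂ => ∫ p : ℝ × ℝ,
      (Real.exp (-|v₁ - v₂|) + Real.exp (-|p.1 - p.2|) -
        Real.exp (-|v₁ - p.1|) - Real.exp (-|v₂ - p.1|)) ∂((μ.map V).prod (μ.map V))) :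
    (∫ p : (ℝ × ℝ × ℝ) × (ℝ × ℝ × ℝ),
        Real.exp (-|p.1.1 - p.2.1| - |p.1.2.1 - p.2.2.1| - |p.1.2.2 - p.2.2.2|)
        ∂(ν.prod ν)) -
      2 * (∫ q : (ℝ × ℝ × ℝ) × ((ℝ × ℝ × ℝ) × ((ℝ × ℝ × ℝ) × (ℝ × ℝ × ℝ))),
        Real.exp (-|q.1.1 - q.2.2.1.1| - |q.1.2.1 - q.2.2.2.2.1| - |q.1.2.2 - q.2.1.2.2|)
        ∂(ν.prod (ν.prod (ν.prod ν)))) +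
      (∫ p : ℝ × ℝ, Real.exp (-|p.1 - p.2|) ∂((μ.map U).prod (μ.map U))) *
      (∫ p : ℝ × ℝ, Real.exp (-|p.1 - p.2|) ∂((μ.map V).prod (μ.map V))) *
      (∫ p : ℝ × ℝ, Real.exp (-|p.1 - p.2|) ∂((μ.map W).prod (μ.map W))) =
    ∫ p : (ℝ × ℝ × ℝ) × (ℝ × ℝ × ℝ),
        SU p.1.1 p.2.1 * SV p.1.2.1 p.2.2.1 * Real.exp (-|p.1.2.2 - p.2.2.2|)
        ∂(ν.prod ν) := by
  have hZ : Measurable fun ω => (U ω, V ω, W ω) := by fun_prop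
  have : IsProbabilityMeasure ν := hν ▸ Measure.isProbabilityMeasure_map hZ.aemeasurable
  have := Measure.isProbabilityMeasure_map (μ := μ) hU.aemeasurable
  have := Measure.isProbabilityMeasure_map (μ := μ) hV.aemeasurable
  have := Measure.isProbabilityMeasure_map (μ := μ) hW.aemeasurable
  have h₁₃ : ν.map (fun x => (x.1, x.2.2)) = (μ.map U).prod (μ.map W) := by
    rw [hν, Measure.map_map (by fun_prop) hZ]
    exact (indepFun_iff_map_prod_eq_prod_map_map hU.aemeasurable hW.aemeasurable).mp hUW
  have h₂₃ : ν.map (fun x => (x.2.1, x.2.2)) = (μ.map V).prod (μ.map W) := by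
    rw [hν, Measure.map_map (by fun_prop) hZ]
    exact (indepFun_iff_map_prod_eq_prod_map_map hV.aemeasurable hW.aemeasurable).mp hVW
  have hexp : ∀ a b c : ℝ, exp (-a - b - c) = exp (-a) * exp (-b) * exp (-c) := fun a b c => by
    rw [← exp_add, ← exp_add]; ring_nf
  have hSU' : SU = doubleCenter (fun x y => exp (-|x - y|)) (μ.map U) := by
    funext u₁ u₂; rw [hSU]; exact integral_prod_eq_doubleCenter measurable_exp_neg_abs_sub
      abs_exp_neg_abs_sub_le_one u₁ u₂
  have hSV' : SV = doubleCenter (fun x y => exp (-|x - y|)) (μ.map V) := by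
    funext v₁ v₂; rw [hSV]; exact integral_prod_eq_doubleCenter measurable_exp_neg_abs_sub
      abs_exp_neg_abs_sub_le_one v₁ v₂
  simp only [hexp, hSU', hSV']
  exact (integral_doubleCenter_mul_doubleCenter_mul_kernel_prod measurable_exp_neg_abs_sub
    abs_exp_neg_abs_sub_le_one (fun x y => by rw [abs_sub_comm]) h₁₃ h₂₃).symm
end

section
/- Define S₀(a,b) = e^{-|a−b|} + e^{-a} + e^{a−1} + e^{-b} + e^{b−1} + 2e^{-1} − 4. If U is uniformly distributed on (0,1), then for every u ∈ [0,1], E[S₀(u,U)] = 0. -/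
open MeasureTheory Real Set

/-! Splitting the integral at `u`, `∫₀¹ e^{-|u-x|} dx = 2 - e^{-u} - e^{u-1}`, which cancels
the `u`-terms of `S₀ u x`; the remaining terms integrate to `2 (1 - e^{-1}) + 2 e^{-1} - 4 = 0`. -/

/-- `S₀(a,b) = e^{-|a−b|} + e^{-a} + e^{a−1} + e^{-b} + e^{b−1} + 2e^{-1} − 4`. -/
noncomputable def S₀ (a b : ℝ) : ℝ :=
  Real.exp (-|a - b|) + Real.exp (-a) + Real.exp (a - 1) +
    Real.exp (-b) + Real.exp (b - 1) + 2 * Real.exp (-1) - 4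

theorem integral_exp_sub_const (a b c : ℝ) :
    ∫ x in a..b, exp (x - c) = exp (b - c) - exp (a - c) := by
  rw [intervalIntegral.integral_comp_sub_right exp, integral_exp]

theorem integral_exp_const_sub (a b c : ℝ) :
    ∫ x in a..b, exp (c - x) = exp (c - a) - exp (c - b) := by
  rw [intervalIntegral.integral_comp_sub_left exp, integral_exp]

theorem integral_exp_neg_abs_sub {a b u : ℝ} (hau : a ≤ u) (hub : u ≤ b) :
    ∫ x in a..b, exp (-|u - x|) = 2 - exp (a - u) - exp (u - b) := by
  have hint : Continuous fun x => exp (-|u - x|) := by fun_prop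
  have left : ∫ x in a..u, exp (-|u - x|) = ∫ x in a..u, exp (x - u) := by
    refine intervalIntegral.integral_congr fun x hx => ?_
    rw [uIcc_of_le hau] at hx
    simp only [abs_of_nonneg (sub_nonneg.2 hx.2), neg_sub]
  have right : ∫ x in u..b, exp (-|u - x|) = ∫ x in u..b, exp (u - x) := by
    refine intervalIntegral.integral_congr fun x hx => ?_
    rw [uIcc_of_le hub] at hx
    simp only [abs_of_nonpos (sub_nonpos.2 hx.1), neg_neg]
  rw [← intervalIntegral.integral_add_adjacent_intervals (hint.intervalIntegrable a u)
    (hint.intervalIntegrable u b), left, right, integral_exp_sub_const, integral_exp_const_sub,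
    sub_self, exp_zero]
  ring

/-- If `U` is uniform on `(0,1)`, then `E[S₀(u,U)] = 0` for every
`u ∈ [0,1]`. -/
theorem S0_expectation_zero (u : ℝ) (hu : u ∈ Icc (0 : ℝ) 1) :
    ∫ x in Ioo (0 : ℝ) 1, S₀ u x = 0 := by
  have hS₀ : S₀ u = fun x => exp (-|u - x|) + exp (0 - x) + exp (x - 1) +
      (exp (-u) + exp (u - 1) + 2 * exp (-1) - 4) := by
    ext x
    simp only [S₀, zero_sub]
    ring
  have hint (f : ℝ → ℝ) (hf : Continuous f) : IntervalIntegrable f volume 0 1 :=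
    hf.intervalIntegrable 0 1
  rw [← integral_Ioc_eq_integral_Ioo, ← intervalIntegral.integral_of_le zero_le_one, hS₀,
    intervalIntegral.integral_add (hint _ (by fun_prop)) intervalIntegrable_const,
    intervalIntegral.integral_add (hint _ (by fun_prop)) (hint _ (by fun_prop)),
    intervalIntegral.integral_add (hint _ (by fun_prop)) (hint _ (by fun_prop)),
    intervalIntegral.integral_const, integral_exp_neg_abs_sub hu.1 hu.2,
    integral_exp_const_sub, integral_exp_sub_const]
  simp only [sub_self, sub_zero, zero_sub, exp_zero, smul_eq_mul, one_mul]
  ring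
end

section
/- Let U, V, W be random variables each uniformly distributed on (0,1), with U independent of W and V independent of W, and let (U₁,V₁,W₁), (U₂,V₂,W₂) be independent copies of (U,V,W). Then E[S₀(U₁,U₂) S₀(V₁,V₂) e^{-|W₁−W₂|}] ≤ 2e^{-1}(6.5e^{-2} − 20e^{-1} + 6.5) = 13e^{-3} − 40e^{-2} + 13e^{-1}, where S₀(a,b) = e^{-|a−b|} + e^{-a} + e^{a−1} + e^{-b} + e^{b−1} + 2e^{-1} − 4. -/
open MeasureTheory ProbabilityTheory Real Set

/-!
`S₀` is the Laplace kernel `k(a,b) = e^{-|a-b|}` doubly centred for the uniform law on `(0,1)`: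
with `m(a) = ∫₀¹ k(a,b) db = 2 - e^{-a} - e^{a-1}` and `∫₀¹ m = 2e^{-1}`, one has
`S₀(a,b) = k(a,b) - m(a) - m(b) + 2e^{-1}`.

Since `xy ≤ (x² + y²)/2`, the expectation is at most the mean of `E[S₀(U₁,U₂)² e^{-|W₁-W₂|}]` and
the same quantity for `V`. As `U ⫫ W`, the pairs `(U₁,U₂)` and `(W₁,W₂)` are independent, so each
of these factors as `(∫∫ S₀²) · (∫∫ k) = (13/2 - 20e^{-1} + 13/2 e^{-2}) · 2e^{-1}`. Expanding the
square, `∫∫ S₀² = ∫∫ k² - 2 ∫ m² + (2e^{-1})²`, where the cross terms are reduced to `∫ m²` by the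
symmetry of `k`.
-/

lemma integral_eq_sub_of_hasDerivAt_of_continuous {F f : ℝ → ℝ} (hF : ∀ x, HasDerivAt F (f x) x)
    (hf : Continuous f) (a b : ℝ) : ∫ x in a..b, f x = F b - F a :=
  intervalIntegral.integral_eq_sub_of_hasDerivAt (fun x _ => hF x) (hf.intervalIntegrable a b)

lemma integral_exp_mul_add {t : ℝ} (ht : t ≠ 0) (d a b : ℝ) :
    ∫ x in a..b, exp (t * x + d) = (exp (t * b + d) - exp (t * a + d)) / t := by
  rw [integral_eq_sub_of_hasDerivAt_of_continuous (F := fun x => exp (t * x + d) / t)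
    (fun x => ?_) (by fun_prop), sub_div]
  have h := (((hasDerivAt_id' x).const_mul t).add_const d).exp.div_const t
  rwa [mul_one, mul_div_cancel_right₀ _ ht] at h

lemma integral_exp_neg_mul_abs_sub {t : ℝ} (ht : t ≠ 0) {a : ℝ} (ha : a ∈ Icc (0:ℝ) 1) :
    ∫ b in (0:ℝ)..1, exp (-(t * |a - b|)) = (2 - exp (-(t * a)) - exp (-(t * (1 - a)))) / t := by
  have hc : Continuous fun b => exp (-(t * |a - b|)) := by fun_prop
  have left : ∫ b in (0:ℝ)..a, exp (-(t * |a - b|)) = ∫ b in (0:ℝ)..a, exp (t * b + -(t * a)) := by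
    refine intervalIntegral.integral_congr fun b hb => ?_
    rw [uIcc_of_le ha.1] at hb
    simp only [abs_of_nonneg (sub_nonneg.2 hb.2)]
    ring_nf
  have right : ∫ b in a..1, exp (-(t * |a - b|)) = ∫ b in a..1, exp (-t * b + t * a) := by
    refine intervalIntegral.integral_congr fun b hb => ?_
    rw [uIcc_of_le ha.2] at hb
    simp only [abs_of_nonpos (sub_nonpos.2 hb.1)]
    ring_nf
  rw [← intervalIntegral.integral_add_adjacent_intervals (hc.intervalIntegrable 0 a)
    (hc.intervalIntegrable a 1), left, right, integral_exp_mul_add ht,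
    integral_exp_mul_add (neg_ne_zero.2 ht), add_neg_cancel, mul_zero, zero_add,
    show -t * 1 + t * a = -(t * (1 - a)) by ring, neg_mul, neg_add_cancel, Real.exp_zero]
  field_simp
  ring

lemma integral_integral_exp_neg_mul_abs_sub {t : ℝ} (ht : t ≠ 0) :
    ∫ a in (0:ℝ)..1, ∫ b in (0:ℝ)..1, exp (-(t * |a - b|)) = 2 * (t - 1 + exp (-t)) / t ^ 2 := by
  rw [intervalIntegral.integral_congr fun a ha =>
      integral_exp_neg_mul_abs_sub ht (by rwa [uIcc_of_le zero_le_one] at ha),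
    integral_eq_sub_of_hasDerivAt_of_continuous
      (F := fun x => (2 * x + exp (-(t * x)) / t - exp (-(t * (1 - x))) / t) / t)
      (fun x => ?_) (by fun_prop)]
  · field_simp
    norm_num
    ring
  · refine ((((hasDerivAt_id' x).const_mul 2).add
      (((hasDerivAt_id' x).const_mul t).neg.exp.div_const t)).sub
      ((((hasDerivAt_id' x).const_sub 1).const_mul t).neg.exp.div_const t)).div_const t
      |>.congr_deriv ?_
    simp only [Pi.neg_apply]
    field_simp
    ring

lemma integral_integral_exp_neg_abs_sub :
    ∫ a in (0:ℝ)..1, ∫ b in (0:ℝ)..1, exp (-|a - b|) = 2 * exp (-1) := by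
  simpa using integral_integral_exp_neg_mul_abs_sub one_ne_zero

noncomputable def laplaceMean (a : ℝ) : ℝ := 2 - exp (-a) - exp (a - 1)

@[fun_prop]
lemma continuous_laplaceMean : Continuous laplaceMean := by
  unfold laplaceMean; fun_prop

@[fun_prop]
lemma continuous_S₀ : Continuous fun p : ℝ × ℝ => S₀ p.1 p.2 := by
  unfold S₀; fun_prop

lemma S₀_eq_laplaceMean (a b : ℝ) :
    S₀ a b = exp (-|a - b|) - laplaceMean a - laplaceMean b + 2 * exp (-1) := by
  unfold S₀ laplaceMean; ring

lemma integral_exp_neg_abs_sub_s11 {a : ℝ} (ha : a ∈ Icc (0:ℝ) 1) :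
    ∫ b in (0:ℝ)..1, exp (-|a - b|) = laplaceMean a := by
  simpa [laplaceMean] using integral_exp_neg_mul_abs_sub one_ne_zero ha

lemma integral_laplaceMean : ∫ a in (0:ℝ)..1, laplaceMean a = 2 * exp (-1) := by
  rw [← intervalIntegral.integral_congr fun a ha =>
      integral_exp_neg_abs_sub_s11 (by rwa [uIcc_of_le zero_le_one] at ha)]
  exact integral_integral_exp_neg_abs_sub

lemma integral_laplaceMean_sq :
    ∫ a in (0:ℝ)..1, laplaceMean a ^ 2 = -3 + 10 * exp (-1) - exp (-1) ^ 2 := by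
  rw [integral_eq_sub_of_hasDerivAt_of_continuous
    (F := fun x => (4 + 2 * exp (-1)) * x - exp (-x) ^ 2 / 2 + exp (x - 1) ^ 2 / 2
      + 4 * exp (-x) - 4 * exp (x - 1))
    (fun x => ?_) (by fun_prop)]
  · norm_num
    ring
  · have hprod : exp (-x) * exp (x - 1) = exp (-1) := by rw [← exp_add]; ring_nf
    refine (((((hasDerivAt_id' x).const_mul (4 + 2 * exp (-1))).sub
      (((hasDerivAt_neg x).exp.pow 2).div_const 2)).add
      ((((hasDerivAt_id' x).sub_const 1).exp.pow 2).div_const 2)).add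
      ((hasDerivAt_neg x).exp.const_mul 4)).sub (((hasDerivAt_id' x).sub_const 1).exp.const_mul 4)
      |>.congr_deriv ?_
    simp only [laplaceMean]
    linear_combination (-2) * hprod

noncomputable abbrev uniform01 : Measure ℝ := volume.restrict (Ioo 0 1)

instance isProbabilityMeasure_uniform01 : IsProbabilityMeasure uniform01 :=
  ⟨by simp [Real.volume_Ioo]⟩

lemma integral_uniform01 (f : ℝ → ℝ) : ∫ x, f x ∂uniform01 = ∫ x in (0:ℝ)..1, f x := by
  rw [intervalIntegral.integral_of_le zero_le_one, integral_Ioc_eq_integral_Ioo]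

lemma uniform01_prod : uniform01.prod uniform01 = volume.restrict (Ioo 0 1 ×ˢ Ioo 0 1) := by
  rw [Measure.prod_restrict, Measure.volume_eq_prod]

lemma integrable_uniform01_prod {F : ℝ × ℝ → ℝ} (hF : Continuous F) :
    Integrable F (uniform01.prod uniform01) := by
  rw [uniform01_prod]
  exact (hF.continuousOn.integrableOn_compact (isCompact_Icc.prod isCompact_Icc)).mono_set
    (prod_mono Ioo_subset_Icc_self Ioo_subset_Icc_self)

lemma integrable_uniform01_prod_prod {F : (ℝ × ℝ) × (ℝ × ℝ) → ℝ} (hF : Continuous F) :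
    Integrable F ((uniform01.prod uniform01).prod (uniform01.prod uniform01)) := by
  rw [uniform01_prod, Measure.prod_restrict, Measure.volume_eq_prod]
  have hK := isCompact_Icc (a := (0:ℝ)) (b := 1)
  exact (hF.continuousOn.integrableOn_compact ((hK.prod hK).prod (hK.prod hK))).mono_set
    (prod_mono (prod_mono Ioo_subset_Icc_self Ioo_subset_Icc_self)
      (prod_mono Ioo_subset_Icc_self Ioo_subset_Icc_self))

lemma integral_uniform01_prod {F : ℝ → ℝ → ℝ} (hF : Continuous (Function.uncurry F)) :
    ∫ x, F x.1 x.2 ∂(uniform01.prod uniform01) = ∫ a in (0:ℝ)..1, ∫ b in (0:ℝ)..1, F a b := by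
  rw [integral_prod (fun x => F x.1 x.2) (integrable_uniform01_prod hF)]
  simp only [integral_uniform01]

lemma integral_exp_neg_abs_sub_mul_laplaceMean_fst :
    ∫ x, exp (-|x.1 - x.2|) * laplaceMean x.1 ∂(uniform01.prod uniform01) =
      ∫ a in (0:ℝ)..1, laplaceMean a ^ 2 := by
  rw [integral_uniform01_prod (F := fun a b => exp (-|a - b|) * laplaceMean a) (by fun_prop)]
  refine intervalIntegral.integral_congr fun a ha => ?_
  simp only [intervalIntegral.integral_mul_const, sq]
  rw [integral_exp_neg_abs_sub_s11 (by rwa [uIcc_of_le zero_le_one] at ha)]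

lemma integral_exp_neg_abs_sub_mul_laplaceMean_snd :
    ∫ x, exp (-|x.1 - x.2|) * laplaceMean x.2 ∂(uniform01.prod uniform01) =
      ∫ a in (0:ℝ)..1, laplaceMean a ^ 2 := by
  rw [← integral_prod_swap]
  simpa only [Prod.fst_swap, Prod.snd_swap, abs_sub_comm] using
    integral_exp_neg_abs_sub_mul_laplaceMean_fst

lemma integral_integral_sq_S₀ :
    ∫ a in (0:ℝ)..1, ∫ b in (0:ℝ)..1, S₀ a b ^ 2 =
      13 / 2 - 20 * exp (-1) + 13 / 2 * exp (-1) ^ 2 := by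
  have expand : ∀ x : ℝ × ℝ, S₀ x.1 x.2 ^ 2 = exp (-(2 * |x.1 - x.2|))
      - 2 * (exp (-|x.1 - x.2|) * laplaceMean x.1) - 2 * (exp (-|x.1 - x.2|) * laplaceMean x.2)
      + 4 * exp (-1) * exp (-|x.1 - x.2|) + laplaceMean x.1 ^ 2 + laplaceMean x.2 ^ 2
      + 2 * (laplaceMean x.1 * laplaceMean x.2) - 4 * exp (-1) * laplaceMean x.1
      - 4 * exp (-1) * laplaceMean x.2 + 4 * exp (-1) ^ 2 := by
    intro x
    have hsq : exp (-|x.1 - x.2|) ^ 2 = exp (-(2 * |x.1 - x.2|)) := by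
      rw [sq, ← exp_add]; ring_nf
    rw [S₀_eq_laplaceMean]
    linear_combination hsq
  have hk := integral_uniform01_prod (F := fun a b => exp (-|a - b|)) (by fun_prop)
  have hk2 := integral_uniform01_prod (F := fun a b => exp (-(2 * |a - b|))) (by fun_prop)
  have hexp2 : exp (-2) = exp (-1) ^ 2 := by rw [sq, ← exp_add]; norm_num
  rw [← integral_uniform01_prod (F := fun a b => S₀ a b ^ 2) (by fun_prop)]
  simp only [expand]
  simp (disch := exact integrable_uniform01_prod (by fun_prop)) only
    [integral_add, integral_sub, integral_const_mul]
  simp only [integral_fun_fst (fun a => laplaceMean a ^ 2),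
    integral_fun_snd (fun a => laplaceMean a ^ 2), integral_fun_fst laplaceMean,
    integral_fun_snd laplaceMean, integral_prod_mul, integral_const, probReal_univ, smul_eq_mul,
    integral_uniform01, integral_laplaceMean, integral_laplaceMean_sq,
    integral_exp_neg_abs_sub_mul_laplaceMean_fst, integral_exp_neg_abs_sub_mul_laplaceMean_snd,
    hk, hk2, integral_integral_exp_neg_abs_sub, integral_integral_exp_neg_mul_abs_sub two_ne_zero,
    hexp2]
  field_simp
  ring

lemma integral_prod_prod_mul {α β : Type*} [MeasurableSpace α] [MeasurableSpace β]
    {μ : Measure α} {ν : Measure β} [SFinite μ] [SFinite ν] {F : α → α → ℝ} {G : β → β → ℝ}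
    (h : Integrable (fun x : (α × β) × (α × β) => F x.1.1 x.2.1 * G x.1.2 x.2.2)
      ((μ.prod ν).prod (μ.prod ν))) :
    ∫ x, F x.1.1 x.2.1 * G x.1.2 x.2.2 ∂(μ.prod ν).prod (μ.prod ν) =
      (∫ a, ∫ a', F a a' ∂μ ∂μ) * ∫ b, ∫ b', G b b' ∂ν ∂ν := by
  rw [integral_prod _ h]
  simp only [integral_prod_mul]
  exact integral_prod_mul (fun a => ∫ a', F a a' ∂μ) (fun b => ∫ b', G b b' ∂ν)

lemma integral_sq_S₀_mul_exp_neg_abs_sub_uniform01 :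
    ∫ x, S₀ x.1.1 x.2.1 ^ 2 * exp (-|x.1.2 - x.2.2|)
      ∂(uniform01.prod uniform01).prod (uniform01.prod uniform01) =
      (13 / 2 - 20 * exp (-1) + 13 / 2 * exp (-1) ^ 2) * (2 * exp (-1)) := by
  rw [integral_prod_prod_mul (F := fun a a' => S₀ a a' ^ 2) (G := fun b b' => exp (-|b - b'|))
    (integrable_uniform01_prod_prod (by fun_prop))]
  simp only [integral_uniform01, integral_integral_sq_S₀, integral_integral_exp_neg_abs_sub]

lemma integral_sq_S₀_mul_exp_neg_abs_sub_of_measurePreserving {α : Type*} [MeasurableSpace α]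
    {ν : Measure α} [SFinite ν] {T : α → ℝ × ℝ}
    (hT : MeasurePreserving T ν (uniform01.prod uniform01)) :
    Integrable (fun p => S₀ (T p.1).1 (T p.2).1 ^ 2 * exp (-|(T p.1).2 - (T p.2).2|)) (ν.prod ν) ∧
    ∫ p, S₀ (T p.1).1 (T p.2).1 ^ 2 * exp (-|(T p.1).2 - (T p.2).2|) ∂(ν.prod ν) =
      (13 / 2 - 20 * exp (-1) + 13 / 2 * exp (-1) ^ 2) * (2 * exp (-1)) := by
  have hTT := hT.prod hT
  have hΦ : Continuous fun x : (ℝ × ℝ) × (ℝ × ℝ) => S₀ x.1.1 x.2.1 ^ 2 * exp (-|x.1.2 - x.2.2|) := by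
    fun_prop
  refine ⟨hTT.integrable_comp_of_integrable (integrable_uniform01_prod_prod hΦ), ?_⟩
  rw [← integral_sq_S₀_mul_exp_neg_abs_sub_uniform01, ← hTT.map_eq,
    integral_map hTT.aemeasurable hΦ.aestronglyMeasurable]
  rfl

lemma integral_mul_mul_le_of_nonneg {α : Type*} [MeasurableSpace α] {μ : Measure α}
    {f g w : α → ℝ} (hw : ∀ x, 0 ≤ w x) (hfw : Integrable (fun x => f x ^ 2 * w x) μ)
    (hgw : Integrable (fun x => g x ^ 2 * w x) μ)
    (hm : AEStronglyMeasurable (fun x => f x * g x * w x) μ) :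
    ∫ x, f x * g x * w x ∂μ ≤ (∫ x, f x ^ 2 * w x ∂μ + ∫ x, g x ^ 2 * w x ∂μ) / 2 := by
  have hbound : ∀ x, ‖f x * g x * w x‖ ≤ (f x ^ 2 * w x + g x ^ 2 * w x) / 2 := fun x => by
    rw [Real.norm_eq_abs, abs_mul, abs_mul, abs_of_nonneg (hw x), ← sq_abs (f x), ← sq_abs (g x)]
    nlinarith [mul_nonneg (sq_nonneg (|f x| - |g x|)) (hw x)]
  rw [← integral_add hfw hgw, ← integral_div]
  exact integral_mono ((hfw.add hgw).div_const 2 |>.mono' hm (ae_of_all _ hbound))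
    ((hfw.add hgw).div_const 2) fun x => (le_abs_self _).trans (hbound x)

lemma measurePreserving_prodMk_of_indepFun {Ω α β : Type*} {mΩ : MeasurableSpace Ω}
    [MeasurableSpace α] [MeasurableSpace β] {μ : Measure Ω} [IsFiniteMeasure μ]
    {X : Ω → α} {Y : Ω → β} (hX : Measurable X) (hY : Measurable Y) (hXY : IndepFun X Y μ) :
    MeasurePreserving (fun ω => (X ω, Y ω)) μ ((μ.map X).prod (μ.map Y)) :=
  ⟨hX.prodMk hY, (indepFun_iff_map_prod_eq_prod_map_map hX.aemeasurable hY.aemeasurable).mp hXY⟩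

/-- If `U, V, W` are each uniform on `(0,1)` with `U ⫫ W` and `V ⫫ W`,
and `(U₁,V₁,W₁), (U₂,V₂,W₂)` are independent copies of `(U,V,W)` (expectations in the copies
being integrals against the product of the joint law with itself), then
`E[S₀(U₁,U₂) S₀(V₁,V₂) e^{-|W₁−W₂|}] ≤ 2e^{-1}(6.5e^{-2} − 20e^{-1} + 6.5)
  = 13e^{-3} − 40e^{-2} + 13e^{-1}`. -/
theorem expectation_S0_S0_le_norming_constant
    {Ω : Type*} {mΩ : MeasurableSpace Ω}
    (μ : Measure Ω) [IsProbabilityMeasure μ]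
    (U V W : Ω → ℝ) (hU : Measurable U) (hV : Measurable V) (hW : Measurable W)
    (hUu : μ.map U = volume.restrict (Ioo (0 : ℝ) 1))
    (hVu : μ.map V = volume.restrict (Ioo (0 : ℝ) 1))
    (hWu : μ.map W = volume.restrict (Ioo (0 : ℝ) 1))
    (hUW : IndepFun U W μ) (hVW : IndepFun V W μ)
    (ν : Measure (ℝ × ℝ × ℝ)) (hν : ν = μ.map (fun ω => (U ω, V ω, W ω))) :
    (∫ p : (ℝ × ℝ × ℝ) × (ℝ × ℝ × ℝ),
        S₀ p.1.1 p.2.1 * S₀ p.1.2.1 p.2.2.1 * Real.exp (-|p.1.2.2 - p.2.2.2|)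
        ∂(ν.prod ν)) ≤
      2 * Real.exp (-1) * (6.5 * Real.exp (-2) - 20 * Real.exp (-1) + 6.5) ∧
    2 * Real.exp (-1) * (6.5 * Real.exp (-2) - 20 * Real.exp (-1) + 6.5) =
      13 * Real.exp (-3) - 40 * Real.exp (-2) + 13 * Real.exp (-1) := by
  have hUVW : Measurable fun ω => (U ω, V ω, W ω) := hU.prodMk (hV.prodMk hW)
  have hUWu := measurePreserving_prodMk_of_indepFun hU hW hUW
  have hVWu := measurePreserving_prodMk_of_indepFun hV hW hVW
  rw [hUu, hWu] at hUWu
  rw [hVu, hWu] at hVWu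
  subst hν
  obtain ⟨hUint, hUval⟩ := integral_sq_S₀_mul_exp_neg_abs_sub_of_measurePreserving
    (hUWu.map_of_comp (g := fun q : ℝ × ℝ × ℝ => (q.1, q.2.2)) (by fun_prop) hUVW)
  obtain ⟨hVint, hVval⟩ := integral_sq_S₀_mul_exp_neg_abs_sub_of_measurePreserving
    (hVWu.map_of_comp (g := fun q : ℝ × ℝ × ℝ => (q.2.1, q.2.2)) (by fun_prop) hUVW)
  have hexp2 : exp (-2) = exp (-1) ^ 2 := by rw [sq, ← exp_add]; norm_num
  have hexp3 : exp (-3) = exp (-1) ^ 3 := by rw [pow_succ, ← hexp2, ← exp_add]; norm_num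
  refine ⟨(integral_mul_mul_le_of_nonneg (fun _ => (exp_pos _).le) hUint hVint
    (by fun_prop)).trans_eq ?_, by rw [hexp2, hexp3]; ring⟩
  rw [hUval, hVval, hexp2]
  ring
end
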